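/- arXiv:2212.04978 — 13 statements merged into one kernel-verified Lean document; each statement's English description precedes it below -/
import Mathlib

section
/- Let K/F be a finite Galois extension of degree n with Galois group Aut(K/F) = {σ_1, ..., σ_n}. Then elements x_1, ..., x_n ∈ K are linearly independent over F if and only if the determinant of the n×n matrix whose (i,j) entry is σ_i(x_j) is nonzero. -/
/-!
If `det [σᵢ(xⱼ)] ≠ 0`, the columns of the matrix are independent over `K`, hence over `F`, and
they are the image of `x` under the `F`-linear map `y ↦ (σᵢ y)ᵢ`. Conversely, for a basis `x`
the matrix `M = [σᵢ(xⱼ)]` satisfies `Mᵀ M = [Tr(xⱼ xₖ)]`, whose determinant is nonzero because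
the trace form of a separable extension is nondegenerate.
-/

open Matrix

theorem linearIndependent_of_det_algHom_apply_ne_zero {F K L ι : Type*} [Field F] [CommRing K]
    [Algebra F K] [CommRing L] [IsDomain L] [Algebra F L] [Fintype ι] [DecidableEq ι]
    (σ : ι → K →ₐ[F] L) (x : ι → K) (h : (of fun i j => σ i (x j)).det ≠ 0) :
    LinearIndependent F x :=
  LinearIndependent.of_comp (LinearMap.pi fun i => (σ i).toLinearMap)
    ((linearIndependent_cols_of_det_ne_zero h).restrict_scalars' F)

theorem Algebra.det_traceMatrix_ne_zero_of_linearIndependent {F K ι : Type*} [Field F] [Field K]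
    [Algebra F K] [FiniteDimensional F K] [Algebra.IsSeparable F K] [Fintype ι] [DecidableEq ι]
    {x : ι → K} (hx : LinearIndependent F x) (hcard : Fintype.card ι = Module.finrank F K) :
    (traceMatrix F x).det ≠ 0 := by
  have : Nonempty ι := Fintype.card_pos_iff.mp (hcard ▸ Module.finrank_pos)
  rw [← coe_basisOfLinearIndependentOfCardEqFinrank hx hcard, traceMatrix_of_basis]
  exact det_traceForm_ne_zero _

theorem Algebra.traceMatrix_map_eq_transpose_mul_of_isGalois {F K ι κ : Type*} [Field F]
    [Field K] [Algebra F K] [FiniteDimensional F K] [IsGalois F K] [Fintype ι]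
    (σ : ι ≃ (K ≃ₐ[F] K)) (x : κ → K) :
    (traceMatrix F x).map (algebraMap F K) =
      (of fun i j => σ i (x j))ᵀ * of fun i j => σ i (x j) := by
  ext j k
  simp only [map_apply, traceMatrix_apply, traceForm_apply, trace_eq_sum_automorphisms,
    mul_apply, transpose_apply, of_apply, ← map_mul]
  exact (σ.sum_comp fun g => g (x j * x k)).symm

/-- Let K/F be a finite Galois extension of degree n with Galois group
Aut(K/F) = {σ_1, ..., σ_n}. Then x_1, ..., x_n ∈ K are linearly independent over F
iff det[σ_i(x_j)] ≠ 0. -/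
theorem stmt0 (F K : Type*) [Field F] [Field K] [Algebra F K]
    [FiniteDimensional F K] [IsGalois F K]
    (n : ℕ) (hn : Module.finrank F K = n)
    (σ : Fin n ≃ (K ≃ₐ[F] K)) (x : Fin n → K) :
    LinearIndependent F x ↔ (Matrix.of fun i j : Fin n => σ i (x j)).det ≠ 0 := by
  refine ⟨fun hx hdet => ?_,
    linearIndependent_of_det_algHom_apply_ne_zero (fun i => (σ i).toAlgHom) x⟩
  apply Algebra.det_traceMatrix_ne_zero_of_linearIndependent hx (by simp [hn])
  apply FaithfulSMul.algebraMap_injective F K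
  rw [RingHom.map_det, RingHom.mapMatrix_apply,
    Algebra.traceMatrix_map_eq_transpose_mul_of_isGalois σ, det_mul, hdet, mul_zero, map_zero]
end

section
/- For every integer n ≥ 1 there exists a nonzero polynomial h ∈ ℤ[X_1, ..., X_n] with the following property: for every prime power q and every monic irreducible polynomial f = X^n + a_1 X^{n-1} + ... + a_n over the finite field F_q, if the image of h(a_1, ..., a_n) in F_q is nonzero, then f is normal over F_q, i.e., the n roots of f in F_{q^n} are linearly independent over F_q. -/
/-!
Let `q = #F` and `φ x = x ^ q`. The conjugates `vᵢ = φⁱ r` satisfy `φⁱ vⱼ = v_{i+j}` (indices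
mod `n`), so applying `φⁱ` to a relation `∑ cⱼ vⱼ = 0` puts `c` in the kernel of the cyclic Hankel
matrix `(v_{i+j})`: the roots are independent as soon as its determinant is nonzero. The product
of these determinants over all relabellings of the roots is a nonzero symmetric polynomial in the
roots, hence a polynomial `h` in the coefficients of `f`.
-/

open Polynomial FiniteField Module Matrix

variable {n : ℕ}

def cyclicHankel {R : Type*} (v : Fin n → R) : Matrix (Fin n) (Fin n) R :=
  Matrix.of fun i j => v (i + j)

lemma cyclicHankel_single [NeZero n] {R : Type*} [Semiring R] (k : Fin n) :
    cyclicHankel (Pi.single k (1 : R)) = Equiv.Perm.permMatrix R (Equiv.subLeft k) := by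
  ext i j
  simp [cyclicHankel, Equiv.Perm.permMatrix, PEquiv.toMatrix_apply, Pi.single_apply,
    eq_sub_iff_add_eq', eq_comm]

noncomputable def cyclicHankelProd (n : ℕ) : MvPolynomial (Fin n) ℤ :=
  ∏ π : Equiv.Perm (Fin n), (cyclicHankel fun k => MvPolynomial.X (π k)).det

lemma aeval_cyclicHankelProd {S : Type*} [CommRing S] [Algebra ℤ S] (v : Fin n → S) :
    MvPolynomial.aeval v (cyclicHankelProd n) =
      ∏ π : Equiv.Perm (Fin n), (cyclicHankel (v ∘ π)).det := by
  simp only [cyclicHankelProd, map_prod, AlgHom.map_det]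
  congr! 2 with π
  ext i j
  simp [cyclicHankel]

lemma cyclicHankelProd_isSymmetric (n : ℕ) : (cyclicHankelProd n).IsSymmetric := by
  intro e
  rw [← MvPolynomial.aeval_X_left_apply (MvPolynomial.rename _ _), MvPolynomial.aeval_rename,
    aeval_cyclicHankelProd]
  exact Fintype.prod_equiv (Equiv.mulLeft e) _ _ fun _ => rfl

lemma cyclicHankelProd_ne_zero (n : ℕ) : cyclicHankelProd n ≠ 0 := by
  cases n with
  | zero => simp [cyclicHankelProd]
  | succ n =>
    intro h
    have := congrArg (MvPolynomial.aeval (Pi.single 0 (1 : ℤ))) h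
    simp [aeval_cyclicHankelProd, Pi.single_comp_equiv, cyclicHankel_single,
      Finset.prod_eq_zero_iff] at this

noncomputable def signedEsymm (n : ℕ) (i : Fin n) : MvPolynomial (Fin n) ℤ :=
  (-1) ^ (i + 1 : ℕ) * MvPolynomial.esymm (Fin n) ℤ (i + 1)

lemma algebraMap_coeff_eq_aeval_signedEsymm {F K : Type*} [CommRing F] [CommRing K]
    [Algebra F K] {f : F[X]} {v : Fin n → K} (hf : f.map (algebraMap F K) = ∏ i, (X - C (v i)))
    (i : Fin n) :
    algebraMap F K (f.coeff (n - 1 - i)) = MvPolynomial.aeval v (signedEsymm n i) := by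
  have hprod : ∏ i, (X - C (v i)) = ((Finset.univ.val.map v).map fun t => X - C t).prod := by
    rw [Multiset.map_map]; rfl
  have hcard : Multiset.card (Finset.univ.val.map v) = n := by simp
  rw [← coeff_map, hf, hprod, Multiset.prod_X_sub_C_coeff _ (by omega), hcard,
    show n - (n - 1 - i) = i + 1 by omega, signedEsymm, map_mul, MvPolynomial.aeval_esymm_eq_multiset_esymm]
  simp

lemma MvPolynomial.IsSymmetric.exists_aeval_signedEsymm_eq {P : MvPolynomial (Fin n) ℤ}
    (hP : P.IsSymmetric) : ∃ h : MvPolynomial (Fin n) ℤ, aeval (signedEsymm n) h = P := by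
  obtain ⟨h₀, hh₀⟩ := esymmAlgHom_surjective ℤ (σ := Fin n) (n := n) (by simp) ⟨P, hP⟩
  refine ⟨aeval (fun i : Fin n => (-1) ^ (i + 1 : ℕ) * X i) h₀, ?_⟩
  have hP₀ : aeval (fun i : Fin n => esymm (Fin n) ℤ (i + 1)) h₀ = P := by
    rw [← esymmAlgHom_apply, hh₀]
  rw [← hP₀, ← AlgHom.comp_apply, comp_aeval]
  congr 2 with i
  simp [signedEsymm, ← mul_assoc, ← mul_pow]

lemma algebraMap_aeval_coeff_eq_aeval_roots {F K : Type*} [CommRing F] [CommRing K]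
    [Algebra F K] {P h : MvPolynomial (Fin n) ℤ} (hh : MvPolynomial.aeval (signedEsymm n) h = P)
    {f : F[X]} {v : Fin n → K} (hf : f.map (algebraMap F K) = ∏ i, (X - C (v i))) :
    algebraMap F K (MvPolynomial.aeval (fun i : Fin n => f.coeff (n - 1 - i)) h) =
      MvPolynomial.aeval v P := by
  rw [← IsScalarTower.coe_toAlgHom' ℤ F K, ← AlgHom.comp_apply, MvPolynomial.comp_aeval, ← hh,
    ← AlgHom.comp_apply, MvPolynomial.comp_aeval]
  congr 2 with i
  exact algebraMap_coeff_eq_aeval_signedEsymm hf i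

theorem linearIndependent_of_det_map_apply_ne_zero {F K ι : Type*} [Field F] [CommRing K]
    [IsDomain K] [Algebra F K] [Fintype ι] [DecidableEq ι] (Ψ : ι → K →ₗ[F] K) (v : ι → K)
    (h : (Matrix.of fun i j => Ψ i (v j)).det ≠ 0) : LinearIndependent F v := by
  refine Fintype.linearIndependent_iff.mpr fun g hg j => (algebraMap F K).injective ?_
  have hmul : (Matrix.of fun i j => Ψ i (v j)) *ᵥ (algebraMap F K ∘ g) = 0 := by
    funext i
    have := congrArg (Ψ i) hg
    simp only [map_sum, LinearMap.map_smul, map_zero] at this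
    simpa [Matrix.mulVec, dotProduct, Algebra.smul_def, mul_comm] using this
  simpa using congrFun (Matrix.eq_zero_of_mulVec_eq_zero h hmul) j

theorem Polynomial.Monic.eq_prod_X_sub_C_of_injective {K ι : Type*} [Field K] [Fintype ι]
    {p : K[X]} (hp : p.Monic) {v : ι → K} (hv : Function.Injective v)
    (hroot : ∀ i, p.IsRoot (v i)) (hdeg : p.natDegree = Fintype.card ι) :
    p = ∏ i, (X - C (v i)) :=
  eq_of_monic_of_dvd_of_natDegree_le (monic_prod_of_monic _ _ fun i _ => monic_X_sub_C (v i)) hp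
    (Fintype.prod_dvd_of_coprime (pairwise_coprime_X_sub_C hv) fun i =>
      dvd_iff_isRoot.mpr (hroot i))
    (by simp [natDegree_prod_of_monic _ _ fun i _ => monic_X_sub_C (v i), hdeg])

section Frobenius

variable {F : Type*} [Field F] [Fintype F]

lemma FiniteField.frobeniusAlgHom_pow_apply {R : Type*} [CommRing R] [Algebra F R] (m : ℕ)
    (x : R) : (frobeniusAlgHom F R ^ m) x = x ^ Fintype.card F ^ m := by
  rw [AlgHom.coe_pow, coe_frobeniusAlgHom, pow_iterate]

variable {K : Type*} [Field K] [Algebra F K] [Finite K]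

lemma FiniteField.frobeniusAlgHom_pow_mod_finrank (m : ℕ) :
    frobeniusAlgHom F K ^ (m % finrank F K) = frobeniusAlgHom F K ^ m := by
  rw [← orderOf_frobeniusAlgHom, pow_mod_orderOf]

lemma FiniteField.injective_frobeniusAlgHom_pow_apply {r : K}
    (hr : (minpoly F r).natDegree = finrank F K) :
    Function.Injective fun i : Fin (finrank F K) => (frobeniusAlgHom F K ^ (i : ℕ)) r := by
  have htop : Algebra.adjoin F {r} = ⊤ :=
    Algebra.adjoin_eq_top_of_primitive_element (Algebra.IsAlgebraic.isAlgebraic r)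
      ((Field.primitive_element_iff_minpoly_natDegree_eq F r).mpr hr)
  exact fun i j hij => (bijective_frobeniusAlgHom_pow F K).1
    (AlgHom.ext_of_adjoin_eq_top htop (by simpa using hij))

lemma FiniteField.map_minpoly_eq_prod_frobeniusAlgHom_pow {r : K}
    (hr : (minpoly F r).natDegree = finrank F K) :
    (minpoly F r).map (algebraMap F K) =
      ∏ i : Fin (finrank F K), (X - C ((frobeniusAlgHom F K ^ (i : ℕ)) r)) :=
  ((minpoly.monic (IsIntegral.of_finite F r)).map _).eq_prod_X_sub_C_of_injective
    (injective_frobeniusAlgHom_pow_apply hr)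
    (fun i => by rw [IsRoot, eval_map_algebraMap, aeval_algHom_apply, minpoly.aeval, map_zero])
    (by simp [hr])

lemma FiniteField.linearIndependent_frobeniusAlgHom_pow_apply {r : K}
    (h : (cyclicHankel fun i : Fin (finrank F K) => (frobeniusAlgHom F K ^ (i : ℕ)) r).det ≠ 0) :
    LinearIndependent F fun i : Fin (finrank F K) => (frobeniusAlgHom F K ^ (i : ℕ)) r := by
  refine linearIndependent_of_det_map_apply_ne_zero
    (fun i : Fin (finrank F K) => (frobeniusAlgHom F K ^ (i : ℕ)).toLinearMap) _ ?_
  convert h using 2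
  ext i j
  rw [cyclicHankel, of_apply, of_apply, Fin.val_add, frobeniusAlgHom_pow_mod_finrank, pow_add,
    AlgHom.mul_apply, AlgHom.toLinearMap_apply]

end Frobenius

theorem stmt1_general (n : ℕ) :
    ∃ h : MvPolynomial (Fin n) ℤ, h ≠ 0 ∧
      ∀ (F K : Type) [Field F] [Fintype F] [Field K] [Algebra F K],
        Module.finrank F K = n →
        ∀ f : Polynomial F, f.Monic → Irreducible f → f.natDegree = n →
        MvPolynomial.aeval (fun i : Fin n => f.coeff (n - 1 - (i : ℕ))) h ≠ 0 →
        ∀ r : K, Polynomial.aeval r f = 0 →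
          LinearIndependent F (fun i : Fin n => r ^ (Fintype.card F) ^ (i : ℕ)) := by
  obtain ⟨h, hh⟩ := (cyclicHankelProd_isSymmetric n).exists_aeval_signedEsymm_eq
  refine ⟨h, fun h0 => cyclicHankelProd_ne_zero n (by rw [← hh, h0, map_zero]), ?_⟩
  intro F K _ _ _ _ hrank f hmon hirr hdeg hne r hr
  subst hrank
  have : FiniteDimensional F K := Module.finite_of_finrank_pos (hdeg ▸ hirr.natDegree_pos)
  have : Finite K := Module.finite_of_finite F
  obtain rfl : f = minpoly F r := minpoly.eq_of_irreducible_of_monic hirr hr hmon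
  have hroots := algebraMap_aeval_coeff_eq_aeval_roots hh
    (map_minpoly_eq_prod_frobeniusAlgHom_pow hdeg)
  rw [aeval_cyclicHankelProd] at hroots
  have hdet : (cyclicHankel fun i : Fin (finrank F K) =>
      (frobeniusAlgHom F K ^ (i : ℕ)) r).det ≠ 0 := fun h0 =>
    hne <| (algebraMap F K).injective <| by
      rw [hroots, map_zero]
      exact Finset.prod_eq_zero (Finset.mem_univ 1) h0
  simpa only [frobeniusAlgHom_pow_apply] using linearIndependent_frobeniusAlgHom_pow_apply hdet

/-- For every n ≥ 1 there is a nonzero h ∈ ℤ[X_1,...,X_n] such that for every finite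
field F_q and monic irreducible f = X^n + a_1 X^{n-1} + ⋯ + a_n over F_q, if the image
of h(a_1,...,a_n) in F_q is nonzero then the n roots r, r^q, ..., r^{q^{n-1}} of f in
F_{q^n} are linearly independent over F_q. -/
theorem stmt1 (n : ℕ) (hn : 1 ≤ n) :
    ∃ h : MvPolynomial (Fin n) ℤ, h ≠ 0 ∧
      ∀ (F K : Type) [Field F] [Fintype F] [Field K] [Algebra F K],
        Module.finrank F K = n →
        ∀ f : Polynomial F, f.Monic → Irreducible f → f.natDegree = n →
        MvPolynomial.aeval (fun i : Fin n => f.coeff (n - 1 - (i : ℕ))) h ≠ 0 →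
        ∀ r : K, Polynomial.aeval r f = 0 →
          LinearIndependent F (fun i : Fin n => r ^ (Fintype.card F) ^ (i : ℕ)) :=
  stmt1_general n
end

section
/- Let p be a prime and n ≥ 1 an integer. There exists a nonzero polynomial h ∈ F_p[X_1, ..., X_n] with the following property: for every power q of p and every monic irreducible polynomial f = X^n + a_1 X^{n-1} + ... + a_n over F_q, if h(a_1, ..., a_n) ≠ 0 in F_q, then f is normal over F_q, i.e., the n roots of f in F_{q^n} are linearly independent over F_q. -/
/-!
The conjugates `r ^ q ^ i` of a root `r` are cyclically permuted by the Frobenius, so applying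
its powers to an `F`-linear relation among them produces a vector in the kernel of the circulant
matrix `(r ^ q ^ (i - j))`; hence `f` is normal as soon as this circulant determinant is nonzero.
That determinant is not symmetric in the roots, but its product over all orderings of the roots
is, so by the fundamental theorem of symmetric polynomials and Vieta's formulas it is the value
at `(a_1, …, a_n)` of a polynomial `h` over `𝔽_p`. The generic circulant determinant is nonzero
because at `(1, 0, …, 0)` the circulant matrix is the identity, hence `h ≠ 0`.
-/

open Finset Matrix Polynomial

namespace MvPolynomial

variable (R : Type*) [CommRing R] (n : ℕ)

/-- The coefficient `a_{i+1}` of `X ^ (n - 1 - i)` in `∏ j, (X - x_j)`, by Vieta. -/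
noncomputable def signedEsymm (i : Fin n) : MvPolynomial (Fin n) R :=
  (-1) ^ ((i : ℕ) + 1) * esymm (Fin n) R ((i : ℕ) + 1)

noncomputable def circulantDet : MvPolynomial (Fin n) R :=
  (circulant X).det

noncomputable def symmetrizedCirculantDet : MvPolynomial (Fin n) R :=
  ∏ σ : Equiv.Perm (Fin n), rename σ (circulantDet R n)

variable {R n}

theorem IsSymmetric.exists_bind₁_signedEsymm_eq {P : MvPolynomial (Fin n) R}
    (hP : P.IsSymmetric) : ∃ h, bind₁ (signedEsymm R n) h = P := by
  obtain ⟨H, hH⟩ := esymmAlgHom_surjective (σ := Fin n) R (n := n) (by simp) ⟨P, hP⟩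
  refine ⟨bind₁ (fun i : Fin n => (-1) ^ ((i : ℕ) + 1) * X i) H, ?_⟩
  have hsign : ∀ i : Fin n, bind₁ (signedEsymm R n) ((-1) ^ ((i : ℕ) + 1) * X i) =
      esymm (Fin n) R ((i : ℕ) + 1) := fun i => by
    rw [map_mul, map_pow, map_neg, map_one, bind₁_X_right, signedEsymm, ← mul_assoc,
      ← pow_add, Even.neg_one_pow ⟨_, rfl⟩, one_mul]
  rw [bind₁_bind₁, _root_.funext hsign]
  simpa [esymmAlgHom_apply] using congrArg Subtype.val hH

variable {L : Type*} [CommRing L]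

theorem eval₂_signedEsymm [IsDomain L] (φ : R →+* L) {f : L[X]} (hf : f.Monic)
    (hdeg : f.natDegree = n) {ρ : Fin n → L} (hroots : f.roots = univ.val.map ρ) (i : Fin n) :
    eval₂ φ ρ (signedEsymm R n i) = f.coeff (n - 1 - i) := by
  have hcard : Multiset.card f.roots = f.natDegree := by simp [hroots, hdeg]
  rw [coeff_eq_esymm_roots_of_card hcard (by omega), hf.leadingCoeff, one_mul, hdeg,
    show n - (n - 1 - i) = i + 1 by omega, hroots, signedEsymm, eval₂_mul, eval₂_pow,
    eval₂_neg, eval₂_one, eval₂_eq_eval_map, map_esymm, ← aeval_eq_eval,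
    aeval_esymm_eq_multiset_esymm]

theorem eval₂_coeff_eq_eval₂_roots [IsDomain L] {h P : MvPolynomial (Fin n) R}
    (hP : bind₁ (signedEsymm R n) h = P) (φ : R →+* L) {f : L[X]} (hf : f.Monic)
    (hdeg : f.natDegree = n) {ρ : Fin n → L} (hroots : f.roots = univ.val.map ρ) :
    eval₂ φ (fun i : Fin n => f.coeff (n - 1 - i)) h = eval₂ φ ρ P := by
  rw [← hP, ← coe_eval₂Hom, ← coe_eval₂Hom, eval₂Hom_bind₁]
  simp only [coe_eval₂Hom, eval₂_signedEsymm φ hf hdeg hroots]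

theorem eval₂_circulantDet (φ : R →+* L) (v : Fin n → L) :
    eval₂ φ v (circulantDet R n) = (circulant v).det := by
  rw [circulantDet, ← coe_eval₂Hom, RingHom.map_det, RingHom.mapMatrix_apply, map_circulant]
  simp

theorem eval₂_symmetrizedCirculantDet (φ : R →+* L) (v : Fin n → L) :
    eval₂ φ v (symmetrizedCirculantDet R n) =
      ∏ σ : Equiv.Perm (Fin n), (circulant (v ∘ σ)).det := by
  simp only [symmetrizedCirculantDet, ← coe_eval₂Hom, map_prod]
  simp only [coe_eval₂Hom, eval₂_rename, eval₂_circulantDet]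

variable (R n)

theorem symmetrizedCirculantDet_isSymmetric : (symmetrizedCirculantDet R n).IsSymmetric := by
  intro τ
  rw [symmetrizedCirculantDet, map_prod]
  simp only [rename_rename, ← Equiv.Perm.coe_mul]
  exact Fintype.prod_equiv (Equiv.mulLeft τ) _ _ fun σ => rfl

theorem circulantDet_ne_zero [Nontrivial R] [NeZero n] : circulantDet R n ≠ 0 := by
  intro h0
  have := eval₂_circulantDet (RingHom.id R) (Pi.single 0 1 : Fin n → R)
  rw [circulant_single_one, det_one, h0, eval₂_zero] at this
  exact zero_ne_one this

theorem symmetrizedCirculantDet_ne_zero [IsDomain R] [NeZero n] :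
    symmetrizedCirculantDet R n ≠ 0 :=
  prod_ne_zero_iff.mpr fun σ _ =>
    (map_ne_zero_iff _ (rename_injective _ σ.injective)).mpr (circulantDet_ne_zero R n)

end MvPolynomial

open Fin.NatCast in
theorem linearIndependent_of_det_circulant_ne_zero {F K : Type*} [Field F] [Field K]
    [Algebra F K] {n : ℕ} [NeZero n] (σ : K →ₗ[F] K) {v : Fin n → K}
    (hσ : ∀ i, σ (v i) = v (i + 1)) (hdet : (circulant v).det ≠ 0) :
    LinearIndependent F v := by
  have hshift : ∀ (m : ℕ) i, (σ ^ m) (v i) = v (i + (m : Fin n)) := by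
    intro m
    induction m with
    | zero => simp
    | succ m ih =>
      intro i
      rw [pow_succ, Module.End.mul_apply, hσ, ih, Nat.cast_succ, add_assoc, add_comm 1]
  rw [Fintype.linearIndependent_iff]
  intro c hc
  have hvec : (fun k => algebraMap F K (c k)) ᵥ* circulant v = 0 := by
    funext j
    -- the `j`-th entry of `c ᵥ* circulant v` is the relation `hc` moved by `σ ^ (-j)`
    have := congrArg (σ ^ ((-j : Fin n) : ℕ)) hc
    simp only [map_sum, map_smul, hshift, Fin.cast_val_eq_self, map_zero] at this
    simpa [vecMul, dotProduct, Algebra.smul_def, sub_eq_add_neg, mul_comm] using this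
  intro k
  simpa using congrFun (eq_zero_of_vecMul_eq_zero hdet hvec) k

section FiniteField

open Module

variable {F K : Type*} [Field F] [Fintype F] [Field K] [Algebra F K]

local notation "q" => Fintype.card F

theorem FiniteField.frobeniusAlgHom_pow_apply_s3 (m : ℕ) (x : K) :
    (FiniteField.frobeniusAlgHom F K ^ m) x = x ^ q ^ m := by
  rw [AlgHom.coe_pow, FiniteField.coe_frobeniusAlgHom, pow_iterate]

variable [Finite K] {n : ℕ}

theorem FiniteField.pow_card_pow_val_add_one [NeZero n] (hn : finrank F K = n) (x : K)
    (i : Fin n) :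
    (x ^ q ^ (i : ℕ)) ^ q = x ^ q ^ ((i + 1 : Fin n) : ℕ) := by
  rw [← pow_mul, ← pow_succ, Fin.val_add, Fin.val_one', Nat.add_mod_mod,
    ← frobeniusAlgHom_pow_apply_s3, ← frobeniusAlgHom_pow_apply_s3,
    ← pow_mod_orderOf (frobeniusAlgHom F K) (i + 1), orderOf_frobeniusAlgHom, hn]

theorem FiniteField.injective_pow_card_pow (hn : finrank F K = n) {r : K}
    (hr : IntermediateField.adjoin F {r} = ⊤) :
    Function.Injective fun i : Fin n => r ^ q ^ (i : ℕ) := by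
  subst hn
  have hgen : Algebra.adjoin F {r} = ⊤ := by
    rw [← IntermediateField.adjoin_simple_toSubalgebra_of_isAlgebraic
      (Algebra.IsAlgebraic.isAlgebraic r), hr, IntermediateField.top_toSubalgebra]
  have heval : Function.Injective fun φ : K →ₐ[F] K => φ r := fun φ ψ h =>
    AlgHom.ext_of_adjoin_eq_top hgen fun x hx => by rw [Set.mem_singleton_iff.mp hx]; exact h
  simpa only [Function.comp_def, frobeniusAlgHom_pow_apply_s3] using
    heval.comp (bijective_frobeniusAlgHom_pow F K).1

theorem FiniteField.roots_map_eq_conjugates (hn : finrank F K = n) {f : F[X]} (hf : f.Monic)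
    (hirr : Irreducible f) (hdeg : f.natDegree = n) {r : K} (hr : aeval r f = 0) :
    (f.map (algebraMap F K)).roots = univ.val.map fun i : Fin n => r ^ q ^ (i : ℕ) := by
  have hmin : minpoly F r = f := (minpoly.eq_of_irreducible_of_monic hirr hr hf).symm
  have hgen : IntermediateField.adjoin F {r} = ⊤ :=
    (Field.primitive_element_iff_minpoly_natDegree_eq F r).mpr (by rw [hmin, hdeg, hn])
  have hnodup := univ.nodup.map (injective_pow_card_pow hn hgen)
  refine (Multiset.eq_of_le_of_card_le
    ((Multiset.le_iff_subset hnodup).mpr fun x hx => ?_) ?_).symm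
  · obtain ⟨i, -, rfl⟩ := Multiset.mem_map.mp hx
    rw [mem_roots (hf.map _).ne_zero, IsRoot, eval_map_algebraMap,
      ← frobeniusAlgHom_pow_apply_s3, aeval_algHom_apply, hr, map_zero]
  · simpa [hf.natDegree_map, hdeg] using card_roots' (f.map (algebraMap F K))

end FiniteField

open MvPolynomial in
/-- Let p be a prime and n ≥ 1. There is a nonzero h ∈ F_p[X_1,...,X_n] such that for
every finite field F_q of characteristic p and monic irreducible
f = X^n + a_1 X^{n-1} + ⋯ + a_n over F_q, if h(a_1,...,a_n) ≠ 0 in F_q then the n roots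
of f in F_{q^n} are linearly independent over F_q. -/
theorem stmt3 (p : ℕ) (hp : p.Prime) (n : ℕ) (hn : 1 ≤ n) :
    ∃ h : MvPolynomial (Fin n) (ZMod p), h ≠ 0 ∧
      ∀ (F K : Type) [Field F] [Fintype F] [Field K] [Algebra F K] [CharP F p],
        Module.finrank F K = n →
        ∀ f : Polynomial F, f.Monic → Irreducible f → f.natDegree = n →
        MvPolynomial.eval₂ (ZMod.castHom dvd_rfl F)
          (fun i : Fin n => f.coeff (n - 1 - (i : ℕ))) h ≠ 0 →
        ∀ r : K, Polynomial.aeval r f = 0 →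
          LinearIndependent F (fun i : Fin n => r ^ (Fintype.card F) ^ (i : ℕ)) := by
  have : NeZero n := ⟨by omega⟩
  have : Fact p.Prime := ⟨hp⟩
  obtain ⟨h, hh⟩ :=
    (symmetrizedCirculantDet_isSymmetric (ZMod p) n).exists_bind₁_signedEsymm_eq
  refine ⟨h, fun h0 => symmetrizedCirculantDet_ne_zero (ZMod p) n (by rw [← hh, h0, map_zero]),
    ?_⟩
  intro F K _ _ _ _ _ hrank f hf hirr hdeg hval r hr
  have : FiniteDimensional F K := .of_finrank_pos (by omega)
  have : Finite K := Module.finite_of_finite F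
  set ρ : Fin n → K := fun i => r ^ Fintype.card F ^ (i : ℕ)
  set cast : ZMod p →+* K := (algebraMap F K).comp (ZMod.castHom dvd_rfl F)
  have hroots := FiniteField.roots_map_eq_conjugates hrank hf hirr hdeg hr
  have hsym :
      algebraMap F K (eval₂ (ZMod.castHom dvd_rfl F) (fun i : Fin n => f.coeff (n - 1 - i)) h) =
        ∏ σ : Equiv.Perm (Fin n), (circulant (ρ ∘ σ)).det := by
    rw [eval₂_comp_left, ← eval₂_symmetrizedCirculantDet cast,
      ← eval₂_coeff_eq_eval₂_roots hh cast (hf.map _) (by rw [hf.natDegree_map, hdeg]) hroots]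
    simp only [Function.comp_def, Polynomial.coeff_map, cast]
  have hdet : (circulant ρ).det ≠ 0 := fun h0 =>
    hval <| (algebraMap F K).injective <| by
      rw [map_zero, hsym]
      exact prod_eq_zero (mem_univ 1) h0
  exact linearIndependent_of_det_circulant_ne_zero (FiniteField.frobeniusAlgHom F K).toLinearMap
    (FiniteField.pow_card_pow_val_add_one hrank r) hdet
end

section
/- Let n > 2 and let Ψ_n be the multivariate polynomial over ℂ in variables X_j indexed by j ∈ ℤ/nℤ defined by Ψ_n = ∏_{i ∈ (ℤ/nℤ)^×} (∑_{j ∈ ℤ/nℤ} ε_n^{ij} X_j), where ε_n = e^{2π√(-1)/n}. Let the symmetric group of ℤ/nℤ act on polynomials by permuting the variables. Then the stabilizer of Ψ_n under this action is exactly the group AGL(1, ℤ/nℤ) of affine permutations, i.e., a permutation σ of ℤ/nℤ fixes Ψ_n if and only if there exist a ∈ (ℤ/nℤ)^× and b ∈ ℤ/nℤ such that σ(x) = ax + b for all x ∈ ℤ/nℤ. -/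
/-!
Write `L_i = ∑_j ψ (i * j) X_j` for the standard additive character `ψ` of `ZMod n`, so that
`Ψ = ∏_{i unit} L_i` and `rename σ L_i = ∑_j ψ (i * σ⁻¹ j) X_j`.

If `σ x = a * x + b`, then `rename σ L_i = ψ (-(i * a⁻¹ * b)) • L_{i * a⁻¹}`; reindexing the product
by `i ↦ i * a⁻¹` leaves the scalar `ψ (-(∑_i i) * a⁻¹ * b)`, and the units sum to zero because
`u ↦ -u` has no fixed point once `2 ≠ 0`.

Conversely, linear forms are irreducible, hence prime in the factorial ring `MvPolynomial`. So if
`σ` fixes `Ψ`, the factor `rename σ L_1` divides some `L_i`, i.e. `j ↦ ψ (σ⁻¹ j)` is proportional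
to `j ↦ ψ (i * j)`; evaluating at `j = 0` and using injectivity of `ψ` gives
`σ⁻¹ j = i * j + σ⁻¹ 0`.
-/

theorem sum_units_eq_zero {R : Type*} [Ring R] [Fintype Rˣ] (h2 : (2 : R) ≠ 0) :
    ∑ u : Rˣ, (u : R) = 0 := by
  refine Finset.sum_involution (fun u _ => -u) (fun u _ => by simp) (fun u _ _ hu => ?_)
    (fun u _ => Finset.mem_univ _) (fun u _ => neg_neg u)
  refine h2 (u.isUnit.mul_left_cancel ?_)
  simpa [two_mul, mul_two, neg_eq_iff_add_eq_zero] using congr_arg Units.val hu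

theorem ZMod.two_ne_zero_of_two_lt {n : ℕ} (hn : 2 < n) : (2 : ZMod n) ≠ 0 := by
  intro h
  have h2 : ((2 : ℕ) : ZMod n) = 0 := by exact_mod_cast h
  rw [ZMod.natCast_eq_zero_iff] at h2
  exact absurd (Nat.le_of_dvd two_pos h2) (by omega)

theorem AddChar.map_sum_eq_prod {ι A M : Type*} [AddCommMonoid A] [CommMonoid M]
    (ψ : AddChar A M) (s : Finset ι) (f : ι → A) :
    ψ (∑ i ∈ s, f i) = ∏ i ∈ s, ψ (f i) := by
  classical
  induction s using Finset.induction_on with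
  | empty => simp
  | insert i s hi ih => rw [Finset.sum_insert hi, Finset.prod_insert hi, ψ.map_add_eq_mul, ih]

theorem exists_affine_of_map_mul_eq_smul_map_symm {R M : Type*} [CommRing R] [CommMonoid M]
    {ψ : AddChar R M} (hψ : Function.Injective ψ) {σ : Equiv.Perm R} {a : Rˣ} {k : M}
    (h : ∀ j, ψ (a * j) = k * ψ (σ.symm j)) :
    ∃ (a : Rˣ) (b : R), ∀ x, σ x = a * x + b := by
  have h0 : k * ψ (σ.symm 0) = 1 := by simpa using (h 0).symm
  have hsymm : ∀ j, σ.symm j = a * j + σ.symm 0 := fun j => hψ <| by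
    rw [ψ.map_add_eq_mul, h, mul_right_comm, h0, one_mul]
  refine ⟨a⁻¹, -(↑a⁻¹ * σ.symm 0), fun x => ?_⟩
  have hx := hsymm (σ x)
  rw [Equiv.symm_apply_apply] at hx
  linear_combination -(↑a⁻¹ : R) * hx - σ x * (Units.inv_mul a)

namespace MvPolynomial

section LinearForm

variable {ι R : Type*} [Fintype ι]

noncomputable def linearForm [CommSemiring R] (c : ι → R) : MvPolynomial ι R :=
  ∑ j, C (c j) * X j

section CommSemiring

variable [CommSemiring R]

theorem coeff_single_linearForm [DecidableEq ι] (c : ι → R) (j : ι) :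
    (linearForm c).coeff (Finsupp.single j 1) = c j := by
  simp [linearForm, coeff_sum, coeff_X, Finsupp.single_left_inj]

theorem linearForm_injective : Function.Injective (linearForm : (ι → R) → MvPolynomial ι R) := by
  classical
  intro c d h
  funext j
  simpa only [coeff_single_linearForm] using congr_arg (coeff (Finsupp.single j 1)) h

theorem C_mul_linearForm (k : R) (c : ι → R) :
    C k * linearForm c = linearForm (k • c) := by
  simp [linearForm, Finset.mul_sum, mul_assoc]

theorem rename_linearForm (σ : Equiv.Perm ι) (c : ι → R) :
    rename σ (linearForm c) = linearForm (c ∘ σ.symm) := by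
  simp only [linearForm, map_sum, map_mul, rename_C, rename_X]
  exact Fintype.sum_equiv σ _ _ fun j => by simp

end CommSemiring

variable {K : Type*} [Field K]

theorem totalDegree_linearForm {c : ι → K} (hc : c ≠ 0) : (linearForm c).totalDegree = 1 := by
  classical
  obtain ⟨j, hj⟩ := Function.ne_iff.mp hc
  apply le_antisymm
  · refine (totalDegree_finsetSum _ _).trans (Finset.sup_le fun i _ => ?_)
    exact (totalDegree_mul _ _).trans (by simp)
  · have hmem : Finsupp.single j 1 ∈ (linearForm c).support := by
      simpa [coeff_single_linearForm] using hj
    simpa using le_totalDegree hmem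

theorem irreducible_linearForm {c : ι → K} (hc : c ≠ 0) : Irreducible (linearForm c) := by
  refine irreducible_of_totalDegree_eq_one (totalDegree_linearForm hc) fun x hx => ?_
  classical
  obtain ⟨j, hj⟩ := Function.ne_iff.mp hc
  have hxj := hx (Finsupp.single j 1)
  rw [coeff_single_linearForm] at hxj
  exact Ne.isUnit fun hx0 => hj (by simpa [hx0] using hxj)

theorem exists_eq_smul_of_linearForm_dvd {c d : ι → K} (hc : c ≠ 0) (hd : d ≠ 0)
    (h : linearForm c ∣ linearForm d) : ∃ k : K, d = k • c := by
  obtain ⟨u, hu⟩ := (irreducible_linearForm hc).associated_of_dvd (irreducible_linearForm hd) h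
  obtain ⟨k, -, hk⟩ := isUnit_iff_eq_C_of_isReduced.mp u.isUnit
  exact ⟨k, linearForm_injective (by rw [← C_mul_linearForm, ← hu, hk, mul_comm])⟩

end LinearForm

section FourierForm

variable {R K : Type*} [CommRing R] [Fintype R]

noncomputable def fourierForm [CommSemiring K] (ψ : AddChar R K) (i : R) : MvPolynomial R K :=
  linearForm fun j => ψ (i * j)

theorem rename_fourierForm_of_affine [CommSemiring K] (ψ : AddChar R K) {σ : Equiv.Perm R}
    {a : Rˣ} {b : R} (hσ : ∀ x, σ x = a * x + b) (i : R) :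
    rename σ (fourierForm ψ i) = C (ψ (-(i * ↑a⁻¹ * b))) * fourierForm ψ (i * ↑a⁻¹) := by
  have hσ_symm : ∀ j, σ.symm j = ↑a⁻¹ * (j - b) := fun j =>
    σ.symm_apply_eq.mpr (by rw [hσ, Units.mul_inv_cancel_left, sub_add_cancel])
  rw [fourierForm, rename_linearForm, fourierForm, C_mul_linearForm]
  congr 1
  funext j
  rw [Function.comp_apply, hσ_symm, Pi.smul_apply, smul_eq_mul, ← ψ.map_add_eq_mul]
  ring_nf

variable [Fintype Rˣ]

theorem rename_prod_fourierForm_of_affine [CommSemiring K] (h2 : (2 : R) ≠ 0)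
    (ψ : AddChar R K) {σ : Equiv.Perm R} {a : Rˣ} {b : R} (hσ : ∀ x, σ x = a * x + b) :
    rename σ (∏ i : Rˣ, fourierForm ψ i) = ∏ i : Rˣ, fourierForm ψ i := by
  have hscalar : ∏ i : Rˣ, C (ψ (-(i * ↑a⁻¹ * b))) = (1 : MvPolynomial R K) := by
    rw [← map_prod, ← ψ.map_sum_eq_prod, Finset.sum_neg_distrib, ← Finset.sum_mul,
      ← Finset.sum_mul, sum_units_eq_zero h2]
    simp
  rw [map_prod]
  simp_rw [rename_fourierForm_of_affine ψ hσ]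
  rw [Finset.prod_mul_distrib, hscalar, one_mul]
  exact Fintype.prod_equiv (Equiv.mulRight a⁻¹) _ _ fun i => by simp

theorem exists_affine_of_rename_prod_fourierForm [Field K] {ψ : AddChar R K}
    (hψ : Function.Injective ψ) {σ : Equiv.Perm R}
    (h : rename σ (∏ i : Rˣ, fourierForm ψ i) = ∏ i : Rˣ, fourierForm ψ i) :
    ∃ (a : Rˣ) (b : R), ∀ x, σ x = a * x + b := by
  have hne : ∀ i : R, (fun j => ψ (i * j)) ≠ 0 := fun i => Function.ne_iff.mpr ⟨0, by simp⟩
  have hne_symm : (fun j => ψ (1 * j)) ∘ σ.symm ≠ 0 := Function.ne_iff.mpr ⟨σ 0, by simp⟩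
  have hprime : Prime (rename σ (fourierForm ψ 1)) := by
    rw [fourierForm, rename_linearForm]
    exact (irreducible_linearForm hne_symm).prime
  have hdvd : rename σ (fourierForm ψ 1) ∣ ∏ i : Rˣ, fourierForm ψ i := by
    rw [← h, map_prod]
    simpa using Finset.dvd_prod_of_mem (fun i : Rˣ => rename σ (fourierForm ψ i))
      (Finset.mem_univ 1)
  obtain ⟨i, -, hi⟩ := hprime.dvd_finsetProd_iff _ |>.mp hdvd
  rw [fourierForm, rename_linearForm, fourierForm] at hi
  obtain ⟨k, hk⟩ := exists_eq_smul_of_linearForm_dvd hne_symm (hne i) hi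
  exact exists_affine_of_map_mul_eq_smul_map_symm hψ (a := i) (k := k) fun j => by
    simpa using congr_fun hk j

end FourierForm

end MvPolynomial

theorem ZMod.exp_pow_val_eq_stdAddChar {n : ℕ} [NeZero n] (u : ZMod n) :
    Complex.exp (2 * Real.pi * Complex.I / n) ^ u.val = ZMod.stdAddChar u := by
  rw [← Complex.exp_nat_mul, ZMod.stdAddChar_apply, ZMod.toCircle_apply]
  congr 1
  ring

open MvPolynomial

/-- For n > 2, the stabilizer of Ψ_n = ∏_{i ∈ (ℤ/nℤ)^×} (∑_{j ∈ ℤ/nℤ} ε_n^{ij} X_j)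
under the permutation action on the variables is exactly AGL(1, ℤ/nℤ): a permutation σ
of ℤ/nℤ fixes Ψ_n iff σ(x) = ax + b for some a ∈ (ℤ/nℤ)^×, b ∈ ℤ/nℤ. -/
theorem stmt4 (n : ℕ) (hn : 2 < n) [NeZero n]
    (ε : ℂ) (hε : ε = Complex.exp (2 * Real.pi * Complex.I / n))
    (Ψ : MvPolynomial (ZMod n) ℂ)
    (hΨ : Ψ = ∏ i : (ZMod n)ˣ, ∑ j : ZMod n, C (ε ^ (((i : ZMod n) * j).val)) * X j)
    (σ : Equiv.Perm (ZMod n)) :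
    rename σ Ψ = Ψ ↔
      ∃ (a : (ZMod n)ˣ) (b : ZMod n), ∀ x : ZMod n, σ x = (a : ZMod n) * x + b := by
  have hΨ_fourier : Ψ = ∏ i : (ZMod n)ˣ, fourierForm ZMod.stdAddChar (i : ZMod n) := by
    simp only [hΨ, hε, fourierForm, linearForm, ZMod.exp_pow_val_eq_stdAddChar]
  rw [hΨ_fourier]
  exact ⟨exists_affine_of_rename_prod_fourierForm ZMod.injective_stdAddChar,
    fun ⟨_, _, hσ⟩ => rename_prod_fourierForm_of_affine (ZMod.two_ne_zero_of_two_lt hn) _ hσ⟩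
end

section
/- Let Δ_n ∈ ℂ[X_0, ..., X_{n-1}] be the determinant of the n×n circulant matrix whose (i,j) entry is X_{j-i mod n}. Then Δ_n = ∏_{m ∣ n} Ψ_m(Z_0^{(m)}, Z_1^{(m)}, ..., Z_{m-1}^{(m)}), where the product is over all positive divisors m of n, Z_k^{(m)} = ∑_{0 ≤ j ≤ n-1, j ≡ k (mod m)} X_j, and Ψ_m = ∏_{i ∈ (ℤ/mℤ)^×} (∑_{j ∈ ℤ/mℤ} ε_m^{ij} X_j) with ε_m = e^{2π√(-1)/m}. -/
/-!
For a primitive `n`-th root of unity `ζ`, the Fourier matrix `(ζ ^ (i t))` diagonalises every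
circulant matrix, the eigenvalue on column `t` being `∑ u, ζ ^ (u t) X_u`, and it is invertible
because it is a Vandermonde matrix in distinct powers of `ζ`.
Hence `Δ_n = ∏_{t < n} ∑_u ζ^{ut} X_u`.
Writing `t = i (n / m)` with `m = n / gcd(t, n)` and `i < m` coprime to `m`, one has
`ζ ^ (u t) = ε_m ^ (i (u mod m))`, so grouping the `X_u` by `u mod m` turns the factor of `t`
into the factor of `Ψ_m(Z^{(m)})` indexed by `i`.
-/

open Finset Matrix MvPolynomial

section Fourier

variable {R : Type*} [CommSemiring R] {n : ℕ} {ζ : R}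

def fourierMatrix (ζ : R) (n : ℕ) : Matrix (ZMod n) (ZMod n) R :=
  of fun i t => ζ ^ (i.val * t.val)

lemma pow_val_add_mul [NeZero n] (hζ : ζ ^ n = 1) (a b : ZMod n) (t : ℕ) :
    ζ ^ ((a + b).val * t) = ζ ^ (a.val * t) * ζ ^ (b.val * t) := by
  rw [← pow_add, ← add_mul, ZMod.val_add]
  exact pow_eq_pow_of_modEq ((Nat.mod_modEq _ n).mul_right t) hζ

lemma circulant_transpose_mul_fourierMatrix [NeZero n] (hζ : ζ ^ n = 1) (a : ZMod n → R) :
    (circulant a)ᵀ * fourierMatrix ζ n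
      = fourierMatrix ζ n * diagonal fun t => ∑ u, ζ ^ (u.val * t.val) * a u := by
  ext i t
  rw [mul_diagonal, mul_apply, mul_sum]
  refine (Fintype.sum_equiv (Equiv.addLeft i) _ _ fun u => ?_).symm
  simp only [transpose_apply, circulant_apply, fourierMatrix, of_apply, Equiv.coe_addLeft,
    add_sub_cancel_left, pow_val_add_mul hζ]
  ring

lemma fourierMatrix_map {S : Type*} [CommSemiring S] (f : R →+* S) :
    (fourierMatrix ζ n).map f = fourierMatrix (f ζ) n := by
  ext i t
  simp [fourierMatrix, map_pow]

end Fourier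

lemma IsPrimitiveRoot.det_fourierMatrix_ne_zero {R : Type*} [CommRing R] [IsDomain R] {n : ℕ}
    [NeZero n] {ζ : R} (hζ : IsPrimitiveRoot ζ n) : (fourierMatrix ζ n).det ≠ 0 := by
  obtain ⟨k, rfl⟩ := Nat.exists_eq_succ_of_ne_zero (NeZero.ne n)
  have hV : fourierMatrix ζ (k + 1) = vandermonde fun i : Fin (k + 1) => ζ ^ (i : ℕ) := by
    ext i t
    exact pow_mul ζ _ _
  rw [hV]
  exact det_vandermonde_ne_zero_iff.2 fun i j h => Fin.ext (hζ.pow_inj i.isLt j.isLt h)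

lemma ZMod.prod_univ_comp_val {M : Type*} [CommMonoid M] (n : ℕ) [NeZero n] (f : ℕ → M) :
    ∏ t : ZMod n, f t.val = ∏ t ∈ range n, f t :=
  prod_nbij (·.val) (fun t _ => mem_range.2 t.val_lt) (ZMod.val_injective n).injOn
    (fun t ht => ⟨t, mem_coe.2 (mem_univ _), ZMod.val_natCast_of_lt (mem_range.1 ht)⟩)
    fun _ _ => rfl

theorem det_circulant_eq_prod_range {K R : Type*} [Field K] [CommRing R] [Algebra K R] {n : ℕ}
    [NeZero n] {ζ : K} (hζ : IsPrimitiveRoot ζ n) (a : ZMod n → R) :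
    (circulant a).det = ∏ t ∈ range n, ∑ u, algebraMap K R ζ ^ (u.val * t) * a u := by
  set V := fourierMatrix (algebraMap K R ζ) n
  have hV : IsUnit V.det := by
    rw [show V = (fourierMatrix ζ n).map (algebraMap K R) from (fourierMatrix_map _).symm,
      ← RingHom.mapMatrix_apply, ← RingHom.map_det]
    exact (isUnit_iff_ne_zero.2 hζ.det_fourierMatrix_ne_zero).map _
  have hζR : algebraMap K R ζ ^ n = 1 := by rw [← map_pow, hζ.pow_eq_one, map_one]
  have hdet := congrArg det (circulant_transpose_mul_fourierMatrix hζR a)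
  rw [det_mul, det_mul, det_transpose, det_diagonal, mul_comm] at hdet
  rw [hV.mul_left_cancel hdet, ZMod.prod_univ_comp_val n
    fun t => ∑ u : ZMod n, algebraMap K R ζ ^ (u.val * t) * a u]

lemma Nat.Coprime.gcd_mul_div_eq {m n i : ℕ} (hmn : m ∣ n) (hi : i.Coprime m) :
    (i * (n / m)).gcd n = n / m := by
  obtain ⟨k, rfl⟩ := hmn
  rcases Nat.eq_zero_or_pos m with rfl | hm
  · simp
  rw [Nat.mul_div_cancel_left k hm, Nat.gcd_mul_right, hi.gcd_eq_one, one_mul]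

lemma Nat.mul_div_lt_of_lt_of_dvd {m n i : ℕ} (hn : n ≠ 0) (hmn : m ∣ n) (hi : i < m) :
    i * (n / m) < n := by
  obtain ⟨k, rfl⟩ := hmn
  rw [Nat.mul_div_cancel_left k (by omega)]
  exact Nat.mul_lt_mul_of_pos_right hi (Nat.pos_of_ne_zero (right_ne_zero_of_mul hn))

/-- Sorting `a < n` by `gcd a n` writes it uniquely as `i * (n / m)` with `m ∣ n`, `i < m` and
`i` coprime to `m` (namely `m = n / gcd a n` and `i = a / gcd a n`). -/
theorem Nat.prod_range_eq_prod_divisors_prod_coprime {M : Type*} [CommMonoid M] {n : ℕ}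
    (hn : n ≠ 0) (f : ℕ → M) :
    ∏ a ∈ range n, f a
      = ∏ m ∈ n.divisors,
          ∏ i ∈ (range m).filter (fun i => Nat.Coprime i m), f (i * (n / m)) := by
  rw [prod_sigma']
  refine (prod_nbij' (fun p : (_ : ℕ) × ℕ => p.2 * (n / p.1))
    (fun a => ⟨n / a.gcd n, a / a.gcd n⟩) ?_ ?_ ?_ ?_ fun _ _ => rfl).symm
  · rintro ⟨m, i⟩ hp
    simp only [mem_sigma, mem_filter, Nat.mem_divisors, mem_range] at hp ⊢
    exact Nat.mul_div_lt_of_lt_of_dvd hn hp.1.1 hp.2.1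
  · intro a ha
    simp only [mem_sigma, mem_filter, Nat.mem_divisors, mem_range] at ha ⊢
    exact ⟨⟨Nat.div_dvd_of_dvd (Nat.gcd_dvd_right a n), hn⟩,
      Nat.div_lt_div_of_lt_of_dvd (Nat.gcd_dvd_right a n) ha,
      Nat.coprime_div_gcd_div_gcd (Nat.gcd_pos_of_pos_right a (Nat.pos_of_ne_zero hn))⟩
  · rintro ⟨m, i⟩ hp
    simp only [mem_sigma, mem_filter, Nat.mem_divisors, mem_range] at hp
    obtain ⟨⟨hmn, -⟩, -, hcop⟩ := hp
    have hnm : 0 < n / m := Nat.div_pos_iff.2 ⟨Nat.pos_of_dvd_of_pos hmn (Nat.pos_of_ne_zero hn),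
      Nat.le_of_dvd (Nat.pos_of_ne_zero hn) hmn⟩
    rw [hcop.gcd_mul_div_eq hmn, Nat.div_div_self hmn hn, Nat.mul_div_cancel _ hnm]
  · intro a _
    simp only [Nat.div_div_self (Nat.gcd_dvd_right a n) hn,
      Nat.div_mul_cancel (Nat.gcd_dvd_left a n)]

lemma sum_range_mul_sum_ite_mod {R ι : Type*} [CommSemiring R] {m : ℕ} (hm : 0 < m)
    (s : Finset ι) (g : ι → ℕ) (f : ℕ → R) (h : ι → R) :
    ∑ k ∈ range m, f k * ∑ x ∈ s, (if g x % m = k then h x else 0)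
      = ∑ x ∈ s, f (g x % m) * h x := by
  simp_rw [mul_sum, mul_ite, mul_zero]
  rw [sum_comm]
  refine sum_congr rfl fun x _ => ?_
  rw [sum_ite_eq, if_pos (mem_range.2 (Nat.mod_lt _ hm))]

lemma pow_div_pow_mul_mod_eq {M : Type*} [Monoid M] {ζ : M} {m n : ℕ} (hζ : ζ ^ n = 1)
    (hmn : m ∣ n) (i u : ℕ) :
    (ζ ^ (n / m)) ^ (i * (u % m)) = ζ ^ (u * (i * (n / m))) := by
  rw [← pow_mul]
  refine pow_eq_pow_of_modEq ?_ hζ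
  have hu : u % m * (n / m) ≡ u * (n / m) [MOD n] := by
    simpa only [Nat.mul_div_cancel' hmn] using (Nat.mod_modEq u m).mul_right' (n / m)
  calc n / m * (i * (u % m)) = i * (u % m * (n / m)) := by ring
    _ ≡ i * (u * (n / m)) [MOD n] := hu.mul_left i
    _ = u * (i * (n / m)) := by ring

lemma Complex.exp_two_pi_I_div_eq_pow {m n : ℕ} (hmn : m ∣ n) (hn : n ≠ 0) :
    exp (2 * Real.pi * I / m) = exp (2 * Real.pi * I / n) ^ (n / m) := by
  have hm : (m : ℂ) ≠ 0 := Nat.cast_ne_zero.2 (ne_zero_of_dvd_ne_zero hn hmn)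
  rw [← exp_nat_mul, Nat.cast_div hmn hm]
  congr 1
  field_simp

theorem stmt7_general (n : ℕ) [NeZero n] :
    (Matrix.of fun i j : ZMod n => (X (j - i) : MvPolynomial (ZMod n) ℂ)).det
      = ∏ m ∈ n.divisors,
          ∏ i ∈ (Finset.range m).filter (fun i => Nat.Coprime i m),
            ∑ k ∈ Finset.range m,
              C (Complex.exp (2 * Real.pi * Complex.I / m) ^ (i * k)) *
                ∑ x : ZMod n, if x.val % m = k then X x else 0 := by
  have hζ := Complex.isPrimitiveRoot_exp n (NeZero.ne n)
  have hcirc : (Matrix.of fun i j : ZMod n => (X (j - i) : MvPolynomial (ZMod n) ℂ))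
      = (circulant X)ᵀ := rfl
  rw [hcirc, det_transpose, det_circulant_eq_prod_range hζ,
    Nat.prod_range_eq_prod_divisors_prod_coprime (NeZero.ne n)]
  refine prod_congr rfl fun m hm => prod_congr rfl fun i _ => ?_
  have hmn := Nat.dvd_of_mem_divisors hm
  rw [sum_range_mul_sum_ite_mod (Nat.pos_of_mem_divisors hm),
    Complex.exp_two_pi_I_div_eq_pow hmn (NeZero.ne n)]
  refine sum_congr rfl fun u _ => ?_
  rw [pow_div_pow_mul_mod_eq hζ.pow_eq_one hmn, algebraMap_eq, map_pow]

/-- The circulant determinant Δ_n = det[X_{j-i mod n}] factors as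
Δ_n = ∏_{m ∣ n} Ψ_m(Z_0^{(m)}, ..., Z_{m-1}^{(m)}) where
Z_k^{(m)} = ∑_{j ≡ k (mod m)} X_j and Ψ_m = ∏_{i ∈ (ℤ/mℤ)^×} ∑_{j ∈ ℤ/mℤ} ε_m^{ij} X_j. -/
theorem stmt7 (n : ℕ) (hn : 0 < n) [NeZero n] :
    (Matrix.of fun i j : ZMod n => (X (j - i) : MvPolynomial (ZMod n) ℂ)).det
      = ∏ m ∈ n.divisors,
          ∏ i ∈ (Finset.range m).filter (fun i => Nat.Coprime i m),
            ∑ k ∈ Finset.range m,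
              C (Complex.exp (2 * Real.pi * Complex.I / m) ^ (i * k)) *
                ∑ x : ZMod n, if x.val % m = k then X x else 0 :=
  stmt7_general n
end

section
/- Let p be a prime, e ≥ 0 and m ≥ 1 with p ∤ m, and set n = p^e m. In the polynomial ring F_p[X_0, ..., X_{n-1}], the circulant determinant Δ_n(X_0, ..., X_{n-1}) = det[X_{j-i mod n}] satisfies Δ_n(X_0, ..., X_{n-1}) = Δ_m(Y_0, ..., Y_{m-1})^{p^e}, where Y_j = ∑_{k=0}^{p^e - 1} X_{j + km} for 0 ≤ j ≤ m-1 and Δ_m is the m×m circulant determinant det[X_{j-i mod m}]. -/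
/-!
A circulant determinant over a finite abelian group `G` is a norm from the group algebra `R[G]`:
multiplication by `∑ v g • [g]` has matrix `circulant v` in the basis `G`. In characteristic `p`,
the power `q = p ^ e` is additive and sends `[g]` to `[q • g]`, so for `G = H × K` with
`q • H = 0` the `q`-th power of `∑ v (h, k) • [(h, k)]` only sees the partial sums
`w k = ∑ h, v (h, k)`: it equals the `q`-th power of `∑ w k • [(0, k)]`, whose circulant is block
diagonal with `|H|` copies of `circulant w`. Since `x ↦ x ^ q` is injective on a reduced ring, the
determinants agree before taking powers. The theorem is the case `H × K = ℤ/p^e × ℤ/m ≅ ℤ/p^e m`,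
where the residues mod `p^e m` lying over `t : ℤ/m` are `t + k m` for `k < p^e`.
-/

open Matrix AddMonoidAlgebra

section GroupAlgebra

variable {R G : Type*} [CommRing R] [AddCommGroup G] [Fintype G] [DecidableEq G]

theorem leftMulMatrix_basis_eq_circulant (x : R[G]) :
    Algebra.leftMulMatrix (AddMonoidAlgebra.basis G R) x = circulant x.coeff := by
  ext i j
  simp [Algebra.leftMulMatrix_eq_repr_mul, AddMonoidAlgebra.basis, circulant_apply, sub_eq_add_neg]

theorem det_circulant_eq_norm (v : G → R) :
    (circulant v).det = Algebra.norm R (∑ g, single g (v g)) := by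
  have hcoeff : (∑ g, single g (v g)).coeff = v := by
    ext i
    simp [AddMonoidAlgebra.coeff_sum, Finsupp.single_apply]
  rw [Algebra.norm_eq_matrix_det (AddMonoidAlgebra.basis G R),
    leftMulMatrix_basis_eq_circulant, hcoeff]

theorem det_circulant_comp_addEquiv {G' : Type*} [AddCommGroup G'] [Fintype G'] [DecidableEq G']
    (φ : G ≃+ G') (v : G' → R) : (circulant (v ∘ φ)).det = (circulant v).det := by
  rw [← det_submatrix_equiv_self φ.toEquiv (circulant v)]
  congr 1
  ext i j
  simp [circulant_apply]

end GroupAlgebra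

theorem AddMonoidAlgebra.sum_single_pow_expChar_pow {R G ι : Type*} [CommRing R]
    [AddCommMonoid G] (p e : ℕ) [ExpChar R p] (s : Finset ι) (g : ι → G) (a : ι → R) :
    (∑ i ∈ s, single (g i) (a i)) ^ p ^ e = ∑ i ∈ s, single (p ^ e • g i) (a i ^ p ^ e) := by
  have : ExpChar R[G] p := ExpChar.of_injective_algebraMap' R p
  simp [sum_pow_char_pow]

section Product

variable {R H K : Type*} [CommRing R] [AddCommGroup H] [Fintype H] [DecidableEq H]
  [AddCommGroup K] [Fintype K] [DecidableEq K]

theorem det_circulant_ite_fst_eq_zero (w : K → R) :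
    (circulant fun g : H × K => if g.1 = 0 then w g.2 else 0).det
      = (circulant w).det ^ Fintype.card H := by
  rw [← det_submatrix_equiv_self (Equiv.prodComm K H)]
  have hblock : (circulant fun g : H × K => if g.1 = 0 then w g.2 else 0).submatrix
      (Equiv.prodComm K H) (Equiv.prodComm K H) = blockDiagonal fun _ : H => circulant w := by
    ext ⟨k, h⟩ ⟨k', h'⟩
    simp [blockDiagonal_apply, circulant_apply, sub_eq_zero]
  rw [hblock, det_blockDiagonal, Finset.prod_const, Finset.card_univ]

theorem det_circulant_prod_eq_pow_of_expChar [IsReduced R] (p e : ℕ) [ExpChar R p]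
    (hH : ∀ h : H, p ^ e • h = 0) (v : H × K → R) :
    (circulant v).det = (circulant fun k => ∑ h, v (h, k)).det ^ Fintype.card H := by
  set w : K → R := fun k => ∑ h, v (h, k)
  have hsupp : ∑ g : H × K, single g (if g.1 = 0 then w g.2 else 0)
      = ∑ k, single (0, k) (w k) := by
    rw [Fintype.sum_prod_type, Finset.sum_comm]
    refine Finset.sum_congr rfl fun k _ => ?_
    rw [Finset.sum_eq_single_of_mem 0 (Finset.mem_univ _) fun h _ hh => by simp [hh]]
    simp
  have hpow : (∑ g, single g (v g)) ^ p ^ e = (∑ k, single ((0 : H), k) (w k)) ^ p ^ e := by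
    rw [sum_single_pow_expChar_pow, sum_single_pow_expChar_pow, Fintype.sum_prod_type]
    simp only [w, sum_pow_char_pow, Prod.smul_mk, hH]
    rw [Finset.sum_comm]
    exact Finset.sum_congr rfl fun k _ => (map_sum (singleAddHom _) _ _).symm
  apply iterateFrobenius_inj R p e
  rw [← det_circulant_ite_fst_eq_zero, iterateFrobenius_def, iterateFrobenius_def,
    det_circulant_eq_norm, det_circulant_eq_norm, ← map_pow, ← map_pow, hsupp, hpow]

end Product

theorem ZMod.sum_range_natCast_add_mul {M : Type*} [AddCommMonoid M] {q m : ℕ} [NeZero q]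
    (hco : m.Coprime q) (a : ℕ) (F : ZMod q → M) :
    ∑ k ∈ Finset.range q, F ((a + k * m : ℕ) : ZMod q) = ∑ h, F h := by
  let u := ZMod.unitOfCoprime m hco
  calc ∑ k ∈ Finset.range q, F ((a + k * m : ℕ) : ZMod q)
      = ∑ h : ZMod q, F (a + h * u) :=
        Finset.sum_nbij' (fun k => (k : ZMod q)) ZMod.val (by simp) (by simp [ZMod.val_lt])
          (fun k hk => ZMod.val_cast_of_lt (Finset.mem_range.mp hk)) (by simp) (by simp [u])
    _ = ∑ h, F h :=
        Fintype.sum_equiv (u.mulRight.trans (Equiv.addLeft (a : ZMod q))) _ _ fun _ => rfl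

theorem ZMod.sum_chineseRemainder_symm {M : Type*} [AddCommMonoid M] {q m : ℕ} [NeZero q]
    [NeZero m] (hco : q.Coprime m) (t : ZMod m) (f : ZMod (q * m) → M) :
    ∑ h : ZMod q, f ((ZMod.chineseRemainder hco).symm (h, t))
      = ∑ k ∈ Finset.range q, f ((t.val + k * m : ℕ) : ZMod (q * m)) := by
  rw [← ZMod.sum_range_natCast_add_mul hco.symm t.val]
  refine Finset.sum_congr rfl fun k _ => congrArg f ?_
  rw [RingEquiv.symm_apply_eq, map_natCast]
  ext <;> simp

open MvPolynomial

theorem stmt8_general (p : ℕ) (hp : p.Prime) (e m : ℕ) (hpm : ¬ p ∣ m)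
    (n : ℕ) (hn : n = p ^ e * m) [NeZero n] [NeZero m] :
    (Matrix.of fun i j : ZMod n => (X (j - i) : MvPolynomial (ZMod n) (ZMod p))).det
      = ((Matrix.of fun i j : ZMod m =>
          ∑ k ∈ Finset.range (p ^ e),
            (X ((((j - i).val + k * m : ℕ) : ZMod n)) :
              MvPolynomial (ZMod n) (ZMod p))).det) ^ (p ^ e) := by
  subst hn
  have : Fact p.Prime := ⟨hp⟩
  have hco : (p ^ e).Coprime m := .pow_left e ((Nat.Prime.coprime_iff_not_dvd hp).mpr hpm)
  let ψ := ZMod.chineseRemainder hco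
  let x : ZMod (p ^ e * m) → MvPolynomial (ZMod (p ^ e * m)) (ZMod p) := fun d => X (-d)
  calc _ = (circulant (x ∘ ψ.symm)).det := by
        rw [show x ∘ ψ.symm = x ∘ ψ.symm.toAddEquiv from rfl, det_circulant_comp_addEquiv]
        congr 1
        ext i j
        simp [x, circulant_apply]
    _ = (circulant fun s => ∑ h, x (ψ.symm (h, s))).det ^ p ^ e := by
        rw [det_circulant_prod_eq_pow_of_expChar p e
          (fun h => by rw [nsmul_eq_mul, ZMod.natCast_self, zero_mul]), ZMod.card]
        rfl
    _ = _ := by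
        congr 2
        refine Matrix.ext fun i j => ?_
        rw [circulant_apply, Matrix.of_apply, ← ZMod.sum_chineseRemainder_symm hco]
        exact Fintype.sum_equiv (Equiv.neg _) _ _ fun h => by
          simp only [x, Equiv.neg_apply, ← map_neg, Prod.neg_mk, neg_sub]; rfl

/-- Let p be prime, e ≥ 0, m ≥ 1 with p ∤ m, and n = p^e m. In F_p[X_0,...,X_{n-1}],
the circulant determinant satisfies Δ_n(X_0,...,X_{n-1}) = Δ_m(Y_0,...,Y_{m-1})^{p^e},
where Y_j = ∑_{k=0}^{p^e-1} X_{j+km}. -/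
theorem stmt8 (p : ℕ) (hp : p.Prime) (e m : ℕ) (hm : 0 < m) (hpm : ¬ p ∣ m)
    (n : ℕ) (hn : n = p ^ e * m) [NeZero n] [NeZero m] :
    (Matrix.of fun i j : ZMod n => (X (j - i) : MvPolynomial (ZMod n) (ZMod p))).det
      = ((Matrix.of fun i j : ZMod m =>
          ∑ k ∈ Finset.range (p ^ e),
            (X ((((j - i).val + k * m : ℕ) : ZMod n)) :
              MvPolynomial (ZMod n) (ZMod p))).det) ^ (p ^ e) :=
  stmt8_general p hp e m hpm n hn
end

section
/- Let q be a power of a prime p and let n = p^e for some e ≥ 1. Let f = X^n + a_1 X^{n-1} + ... + a_n be a monic irreducible polynomial of degree n over F_q, and let r be a root of f in F_{q^n}. Then the roots r, r^q, ..., r^{q^{n-1}} of f are linearly independent over F_q if and only if a_1 ≠ 0. -/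
/-!
The `q`-power Frobenius `φ` is an `F`-linear operator on `K` with `φ ^ n = 1`, and the conjugates
of `r` are the vectors `φ ^ i r`. Since `n = p ^ e`, `(φ - 1) ^ n = φ ^ n - 1 = 0`, so every
polynomial relation among `r, φ r, …, φ ^ (n - 1) r` may be replaced by its gcd with
`(X - 1) ^ n`: the conjugates are independent iff `(φ - 1) ^ (n - 1) r ≠ 0`. In characteristic `p`,
`(X - 1) ^ (n - 1) = 1 + X + ⋯ + X ^ (n - 1)`, so `(φ - 1) ^ (n - 1) r` is the trace of `r`, which is
`-a₁` because `r` generates `K` over `F`.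
-/

open Polynomial IntermediateField

namespace Module.End

variable {F V : Type*} [Field F] [AddCommGroup V] [Module F V]

theorem linearIndependent_pow_apply_iff_aeval (T : Module.End F V) (x : V) (n : ℕ) :
    LinearIndependent F (fun i : Fin n => (T ^ (i : ℕ)) x) ↔
      ∀ g : F[X], g.degree < n → aeval T g x = 0 → g = 0 := by
  have aeval_sum (c : Fin n → F) :
      aeval T (∑ i : Fin n, C (c i) * X ^ (i : ℕ)) x = ∑ i, c i • (T ^ (i : ℕ)) x := by
    simp [map_sum, LinearMap.sum_apply]
  rw [Fintype.linearIndependent_iff]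
  constructor
  · intro h g hg hgx
    have hg_eq : ∑ i : Fin n, C (g.coeff i) * X ^ (i : ℕ) = g := by
      rw [sum_fin (fun i a => C a * X ^ i) (by simp) hg, sum_C_mul_X_pow_eq]
    rw [← hg_eq, aeval_sum] at hgx
    rw [← hg_eq]
    simp [h _ hgx]
  · intro h c hc i
    have := h _ (degree_sum_fin_lt c) (by rw [aeval_sum, hc])
    simpa [coeff_monomial, Fin.val_eq_val] using congr_arg (coeff · i) this

theorem sub_one_pow_pred_apply_eq_zero_of_aeval_eq_zero (T : Module.End F V) {x : V} {n : ℕ}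
    (hx : ((T - 1) ^ n) x = 0) {g : F[X]} (hg0 : g ≠ 0) (hg : g.natDegree < n)
    (hgx : aeval T g x = 0) : ((T - 1) ^ (n - 1)) x = 0 := by
  classical
  obtain ⟨h, hg_eq, hndvd⟩ := exists_eq_pow_rootMultiplicity_mul_and_not_dvd g hg0 1
  set k := g.rootMultiplicity 1
  have hk : k < n :=
    ((count_roots g ▸ Multiset.count_le_card _ _).trans (card_roots' g)).trans_lt hg
  have aeval_X_sub_one_pow (m : ℕ) : aeval T ((X - C 1 : F[X]) ^ m) = (T - 1) ^ m := by simp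
  have hker_h : ((T - 1) ^ k) x ∈ LinearMap.ker (aeval T h) := by
    rwa [LinearMap.mem_ker, ← Module.End.mul_apply, ← aeval_X_sub_one_pow, ← map_mul,
      mul_comm h, ← hg_eq]
  have hker_pow : ((T - 1) ^ k) x ∈ LinearMap.ker (aeval T ((X - C 1 : F[X]) ^ (n - k))) := by
    rwa [LinearMap.mem_ker, aeval_X_sub_one_pow, ← Module.End.mul_apply, ← pow_add,
      Nat.sub_add_cancel hk.le]
  have hcop : IsCoprime h ((X - C 1) ^ (n - k)) :=
    ((irreducible_X_sub_C 1).coprime_iff_not_dvd.2 hndvd).symm.pow_right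
  have hzero : ((T - 1) ^ k) x = 0 :=
    Submodule.disjoint_def.1 (disjoint_ker_aeval_of_isCoprime T hcop) _ hker_h hker_pow
  rw [← Nat.sub_add_cancel (Nat.le_sub_one_of_lt hk), pow_add, Module.End.mul_apply, hzero,
    map_zero]

theorem linearIndependent_pow_apply_iff (T : Module.End F V) {x : V} {n : ℕ} (hn : n ≠ 0)
    (hx : ((T - 1) ^ n) x = 0) :
    LinearIndependent F (fun i : Fin n => (T ^ (i : ℕ)) x) ↔ ((T - 1) ^ (n - 1)) x ≠ 0 := by
  rw [linearIndependent_pow_apply_iff_aeval]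
  constructor
  · intro h hx'
    have hdeg : ((X - C 1 : F[X]) ^ (n - 1)).degree < n := by
      rw [degree_pow, degree_X_sub_C, nsmul_one]
      exact_mod_cast Nat.pred_lt hn
    exact pow_ne_zero _ (X_sub_C_ne_zero 1) (h _ hdeg (by simpa using hx'))
  · intro h g hg hgx
    by_contra hg0
    exact h (sub_one_pow_pred_apply_eq_zero_of_aeval_eq_zero T hx hg0
      ((natDegree_lt_iff_degree_lt hg0).2 hg) hgx)

end Module.End

theorem Polynomial.X_sub_one_pow_expChar_pow_sub_one {R : Type*} [CommRing R] [IsDomain R]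
    (p e : ℕ) [ExpChar R p] :
    (X - 1 : R[X]) ^ (p ^ e - 1) = ∑ i ∈ Finset.range (p ^ e), X ^ i := by
  apply mul_right_cancel₀ (by simpa using X_sub_C_ne_zero (1 : R))
  rw [← pow_succ, Nat.sub_add_cancel (Nat.one_le_pow _ _ (expChar_pos R p)), geom_sum_mul,
    sub_pow_expChar_pow, one_pow]

theorem Algebra.trace_eq_neg_coeff_minpoly {F K : Type*} [Field F] [Field K] [Algebra F K]
    [FiniteDimensional F K] {x : K} (hx : (minpoly F x).natDegree = Module.finrank F K) :
    Algebra.trace F K x = -(minpoly F x).coeff (Module.finrank F K - 1) := by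
  have hadjoin : Module.finrank F⟮x⟯ K = 1 := by
    have := Module.finrank_mul_finrank F F⟮x⟯ K
    rw [adjoin.finrank (.of_finite F x), hx] at this
    exact (Nat.mul_eq_left Module.finrank_pos.ne').1 this
  rw [trace_eq_finrank_mul_minpoly_nextCoeff, hadjoin,
    nextCoeff_of_natDegree_pos (hx ▸ Module.finrank_pos), hx, Nat.cast_one, one_mul]

namespace FiniteField

theorem frobeniusAlgHom_pow_apply_s10 {F R : Type*} [Field F] [Fintype F] [CommRing R] [Algebra F R]
    (i : ℕ) (x : R) : ((frobeniusAlgHom F R).toLinearMap ^ i) x = x ^ Fintype.card F ^ i := by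
  rw [Module.End.pow_apply, AlgHom.coe_toLinearMap, coe_frobeniusAlgHom, pow_iterate]

variable {F K : Type*} [Field F] [Fintype F] [Field K] [Algebra F K] [Finite K]

theorem pow_card_pow_finrank (x : K) : x ^ Fintype.card F ^ Module.finrank F K = x := by
  have := Fintype.ofFinite K
  rw [← Module.card_eq_pow_finrank, pow_card]

theorem linearIndependent_pow_card_pow_iff_trace_ne_zero (p e : ℕ) [CharP F p]
    (hK : Module.finrank F K = p ^ e) (x : K) :
    LinearIndependent F (fun i : Fin (Module.finrank F K) => x ^ Fintype.card F ^ (i : ℕ)) ↔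
      Algebra.trace F K x ≠ 0 := by
  have : ExpChar F p := .prime (CharP.char_is_prime F p)
  set φ := (frobeniusAlgHom F K).toLinearMap
  have hnilp : ((φ - 1) ^ Module.finrank F K) x = 0 := by
    have h := congr_arg (fun g => aeval φ g x) (sub_pow_expChar_pow (X : F[X]) 1 e (p := p))
    simp only [map_pow, map_sub, aeval_X, map_one, one_pow, LinearMap.sub_apply,
      Module.End.one_apply] at h
    rw [hK, h, frobeniusAlgHom_pow_apply_s10, ← hK, pow_card_pow_finrank, sub_self]
  have htrace : ((φ - 1) ^ (Module.finrank F K - 1)) x = algebraMap F K (Algebra.trace F K x) := by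
    have h := congr_arg (fun g => aeval φ g x) (X_sub_one_pow_expChar_pow_sub_one (R := F) p e)
    simp only [map_pow, map_sub, aeval_X, map_one, map_sum, LinearMap.sum_apply,
      φ, frobeniusAlgHom_pow_apply_s10] at h
    rw [algebraMap_trace_eq_sum_pow, Nat.card_eq_fintype_card, hK, h]
  have hconj : (fun i : Fin (Module.finrank F K) => x ^ Fintype.card F ^ (i : ℕ)) =
      fun i : Fin _ => (φ ^ (i : ℕ)) x := funext fun i => (frobeniusAlgHom_pow_apply_s10 i x).symm
  rw [hconj, Module.End.linearIndependent_pow_apply_iff φ Module.finrank_pos.ne' hnilp, htrace,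
    ne_eq, map_eq_zero_iff _ (algebraMap F K).injective]

end FiniteField

theorem stmt10_general (p e : ℕ) (hp : p.Prime)
    (F K : Type*) [Field F] [Fintype F] [CharP F p] [Field K] [Algebra F K]
    (n : ℕ) (hn : n = p ^ e) (hrank : Module.finrank F K = n)
    (f : Polynomial F) (hmonic : f.Monic) (hirr : Irreducible f) (hdeg : f.natDegree = n)
    (r : K) (hr : Polynomial.aeval r f = 0) :
    LinearIndependent F (fun i : Fin n => r ^ (Fintype.card F) ^ (i : ℕ)) ↔
      f.coeff (n - 1) ≠ 0 := by
  subst hrank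
  have : Module.Finite F K := Module.finite_of_finrank_pos (hn ▸ pow_pos hp.pos e)
  have : Finite K := Module.finite_of_finite F
  obtain rfl := minpoly.eq_of_irreducible_of_monic hirr hr hmonic
  rw [FiniteField.linearIndependent_pow_card_pow_iff_trace_ne_zero p e hn,
    Algebra.trace_eq_neg_coeff_minpoly hdeg, neg_ne_zero]

/-- Let q be a power of the prime p and n = p^e, e ≥ 1. A monic irreducible polynomial
f = X^n + a_1 X^{n-1} + ⋯ + a_n over F_q with root r ∈ F_{q^n} has linearly independent
roots r, r^q, ..., r^{q^{n-1}} over F_q iff a_1 ≠ 0. -/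
theorem stmt10 (p e : ℕ) (hp : p.Prime) (he : 1 ≤ e)
    (F K : Type*) [Field F] [Fintype F] [CharP F p] [Field K] [Algebra F K]
    (n : ℕ) (hn : n = p ^ e) (hrank : Module.finrank F K = n)
    (f : Polynomial F) (hmonic : f.Monic) (hirr : Irreducible f) (hdeg : f.natDegree = n)
    (r : K) (hr : Polynomial.aeval r f = 0) :
    LinearIndependent F (fun i : Fin n => r ^ (Fintype.card F) ^ (i : ℕ)) ↔
      f.coeff (n - 1) ≠ 0 :=
  stmt10_general p e hp F K n hn hrank f hmonic hirr hdeg r hr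
end

section
/- Let q be a prime power of characteristic p, and let n be a prime different from p such that q generates the multiplicative group (ℤ/nℤ)^× (i.e., the order of q modulo n is n-1). Let f = X^n + a_1 X^{n-1} + ... + a_n be a monic irreducible polynomial of degree n over F_q, and let r be a root of f in F_{q^n}. Then the roots r, r^q, ..., r^{q^{n-1}} of f are linearly independent over F_q if and only if a_1 ≠ 0. -/
/-!
The Frobenius `x ↦ x ^ q` is an `F`-linear operator `σ` on `K` with `σ ^ n = 1`, so the conjugates
`r, σ r, …, σ ^ (n - 1) r` are linearly independent iff no nonzero polynomial of degree `< n` kills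
`r` under `σ`. The order hypothesis makes `X ^ n - 1 = Φₙ · (X - 1)` a product of two irreducibles
over `F`, so such a polynomial exists only if `(X - 1)(σ)` or `Φₙ(σ)` kills `r`. The first would put
`r` in `F`; the second says `r + σ r + ⋯ + σ ^ (n - 1) r = Tr(r) = -a₁` vanishes.
-/

open Polynomial IntermediateField

theorem LinearIndependent.sum_ne_zero {ι R M : Type*} [Fintype ι] [Nonempty ι] [Ring R]
    [Nontrivial R] [AddCommGroup M] [Module R M] {v : ι → M} (hv : LinearIndependent R v) :
    ∑ i, v i ≠ 0 := fun h =>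
  one_ne_zero <| Fintype.linearIndependent_iff.1 hv (fun _ => (1 : R)) (by simpa using h)
    (Classical.arbitrary ι)

section Operator

variable {F V : Type*} [Field F] [AddCommGroup V] [Module F V]

theorem linearIndependent_pow_apply_of_aeval_ne_zero (T : Module.End F V) (v : V) (n : ℕ)
    (h : ∀ g : F[X], g ≠ 0 → g.natDegree < n → aeval T g v ≠ 0) :
    LinearIndependent F (fun i : Fin n => (T ^ (i : ℕ)) v) := by
  have hX : LinearIndependent F (fun i : Fin n => (X : F[X]) ^ (i : ℕ)) := by
    simpa [Function.comp_def, ← X_pow_eq_monomial] using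
      (basisMonomials F).linearIndependent.comp _ Fin.val_injective
  have hspan : Submodule.span F (Set.range fun i : Fin n => (X : F[X]) ^ (i : ℕ)) ≤
      degreeLT F n := by
    rw [Submodule.span_le]
    rintro _ ⟨i, rfl⟩
    simp [mem_degreeLT]
  have hker : Disjoint (degreeLT F n)
      (LinearMap.ker (LinearMap.applyₗ v ∘ₗ (aeval T).toLinearMap)) := by
    rw [Submodule.disjoint_def]
    intro g hg hgv
    by_contra hg0
    rw [mem_degreeLT, degree_eq_natDegree hg0, Nat.cast_lt] at hg
    exact h g hg0 hg hgv
  simpa [Function.comp_def] using hX.map (hker.mono_left hspan)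

theorem eq_zero_of_isCoprime_of_aeval_eq_zero (T : Module.End F V) {a b : F[X]}
    (hab : IsCoprime a b) {w : V} (ha : aeval T a w = 0) (hb : aeval T b w = 0) : w = 0 :=
  Submodule.disjoint_def.1 (disjoint_ker_aeval_of_isCoprime T hab) w ha hb

theorem aeval_ne_zero_of_irreducible_mul (T : Module.End F V) (v : V) {P Q : F[X]}
    (hP : Irreducible P) (hQ : Irreducible Q) (hPQ : aeval T (P * Q) v = 0)
    (hPv : aeval T P v ≠ 0) (hQv : aeval T Q v ≠ 0) {g : F[X]} (hg : g ≠ 0)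
    (hdeg : g.natDegree < (P * Q).natDegree) : aeval T g v ≠ 0 := by
  have aeval_mul_apply (a b : F[X]) : aeval T (a * b) v = aeval T a (aeval T b v) := by
    rw [map_mul, Module.End.mul_apply]
  intro hgv
  by_cases hPg : P ∣ g
  · obtain ⟨h, rfl⟩ := hPg
    have hh : h ≠ 0 := right_ne_zero_of_mul hg
    have hQh : IsCoprime Q h := by
      refine hQ.coprime_iff_not_dvd.2 fun hdvd => ?_
      have := natDegree_le_of_dvd hdvd hh
      rw [natDegree_mul hP.ne_zero hh, natDegree_mul hP.ne_zero hQ.ne_zero] at hdeg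
      omega
    refine hPv (eq_zero_of_isCoprime_of_aeval_eq_zero T hQh ?_ ?_)
    · rwa [← aeval_mul_apply, mul_comm]
    · rwa [← aeval_mul_apply, mul_comm]
  · refine hQv (eq_zero_of_isCoprime_of_aeval_eq_zero T (hP.coprime_iff_not_dvd.2 hPg) ?_ ?_)
    · rwa [← aeval_mul_apply]
    · rw [← aeval_mul_apply, mul_comm, aeval_mul_apply, hgv, map_zero]

end Operator

theorem irreducible_cyclotomic_of_orderOf_eq_totient {F : Type*} [Field F] [Fintype F] {n : ℕ}
    (hn : n ≠ 0) (horder : orderOf (Fintype.card F : ZMod n) = n.totient) :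
    Irreducible (cyclotomic n F) := by
  obtain ⟨k, hp, hq⟩ := FiniteField.card F (ringChar F)
  have : Fact (ringChar F).Prime := ⟨hp⟩
  have hqn : (Fintype.card F).Coprime n := (ZMod.isUnit_iff_coprime _ n).1 <|
    (orderOf_pos_iff.1 (horder ▸ Nat.totient_pos.2 (Nat.pos_of_ne_zero hn))).isUnit
  rw [hq] at hqn horder
  refine irreducible_of_dvd_cyclotomic_of_natDegree hq
    ((Nat.coprime_pow_left_iff k.pos _ _).1 hqn) dvd_rfl ?_
  rw [natDegree_cyclotomic, ← horder, ← orderOf_units, ZMod.coe_unitOfCoprime, Nat.cast_pow]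

section Frobenius

variable {F K : Type*} [Field F] [Fintype F] [Field K] [Algebra F K]

theorem frobeniusAlgHom_toLinearMap_pow_apply (i : ℕ) (x : K) :
    ((FiniteField.frobeniusAlgHom F K).toLinearMap ^ i) x = x ^ Fintype.card F ^ i := by
  rw [Module.End.pow_apply]
  exact congrFun (pow_iterate _ i) x

theorem aeval_frobeniusAlgHom_X_sub_one_apply (x : K) :
    aeval (FiniteField.frobeniusAlgHom F K).toLinearMap (X - 1 : F[X]) x =
      x ^ Fintype.card F - x := by
  rw [map_sub, aeval_X, map_one, LinearMap.sub_apply, Module.End.one_apply]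
  rfl

theorem aeval_frobeniusAlgHom_X_pow_finrank_sub_one [Finite K] (x : K) :
    aeval (FiniteField.frobeniusAlgHom F K).toLinearMap (X ^ Module.finrank F K - 1 : F[X]) x =
      0 := by
  have := Fintype.ofFinite K
  rw [map_sub, aeval_X_pow, map_one, LinearMap.sub_apply, frobeniusAlgHom_toLinearMap_pow_apply,
    ← Module.card_eq_pow_finrank, FiniteField.pow_card, Module.End.one_apply, sub_self]

theorem pow_card_ne_self_of_one_lt_natDegree_minpoly {r : K}
    (hr : 1 < (minpoly F r).natDegree) : r ^ Fintype.card F ≠ r := by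
  have hint : IsIntegral F r := by
    by_contra h
    simp [minpoly.eq_zero h] at hr
  intro hfix
  have hdvd : minpoly F r ∣ X ^ Nat.card F ^ 1 - X := minpoly.dvd F r (by simp [hfix])
  have := Nat.le_of_dvd one_pos
    ((minpoly.irreducible hint).natDegree_dvd_of_dvd_X_pow_card_pow_sub_X hdvd)
  omega

theorem sum_range_pow_card_pow_eq_neg_nextCoeff_minpoly [Finite K] (r : K)
    (hr : (minpoly F r).natDegree = Module.finrank F K) :
    ∑ i ∈ Finset.range (Module.finrank F K), r ^ Fintype.card F ^ i =
      -algebraMap F K (minpoly F r).nextCoeff := by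
  have htop : Module.finrank F⟮r⟯ K = 1 := by
    have := Module.finrank_mul_finrank F F⟮r⟯ K
    rw [IntermediateField.adjoin.finrank (.of_finite F r), hr] at this
    exact (mul_eq_left₀ Module.finrank_pos.ne').1 this
  rw [Fintype.card_eq_nat_card, ← FiniteField.algebraMap_trace_eq_sum_pow,
    trace_eq_finrank_mul_minpoly_nextCoeff, htop, Nat.cast_one, one_mul, map_neg]

end Frobenius

theorem stmt11_general (n : ℕ) (hnp : n.Prime)
    (F K : Type*) [Field F] [Fintype F] [Field K] [Algebra F K]
    (horder : orderOf ((Fintype.card F : ZMod n)) = n - 1)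
    (hrank : Module.finrank F K = n)
    (f : Polynomial F) (hmonic : f.Monic) (hirr : Irreducible f) (hdeg : f.natDegree = n)
    (r : K) (hr : Polynomial.aeval r f = 0) :
    LinearIndependent F (fun i : Fin n => r ^ (Fintype.card F) ^ (i : ℕ)) ↔
      f.coeff (n - 1) ≠ 0 := by
  have : Fact n.Prime := ⟨hnp⟩
  have : FiniteDimensional F K := Module.finite_of_finrank_pos (hrank ▸ hnp.pos)
  have : Finite K := Module.finite_of_finite F
  set σ := (FiniteField.frobeniusAlgHom F K).toLinearMap
  have hf : f = minpoly F r := minpoly.eq_of_irreducible_of_monic hirr hr hmonic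
  have hconj : (fun i : Fin n => r ^ Fintype.card F ^ (i : ℕ)) =
      fun i : Fin n => (σ ^ (i : ℕ)) r :=
    funext fun i => (frobeniusAlgHom_toLinearMap_pow_apply _ r).symm
  have htrace : ∑ i : Fin n, (σ ^ (i : ℕ)) r = -algebraMap F K (f.coeff (n - 1)) := by
    rw [← hconj, Fin.sum_univ_eq_sum_range (fun i => r ^ Fintype.card F ^ i), ← hrank,
      sum_range_pow_card_pow_eq_neg_nextCoeff_minpoly r (by rw [← hf, hdeg, hrank]), ← hf,
      nextCoeff_of_natDegree_pos (hdeg ▸ hnp.pos), hdeg, hrank]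
  rw [hconj]
  refine ⟨fun hli ha => hli.sum_ne_zero (by rw [htrace, ha, map_zero, neg_zero]), fun ha => ?_⟩
  have hΦ : aeval σ (cyclotomic n F) r ≠ 0 := by
    simpa [cyclotomic_prime, LinearMap.sum_apply, ← Fin.sum_univ_eq_sum_range, htrace] using ha
  have hX1 : aeval σ (X - 1 : F[X]) r ≠ 0 := by
    rw [aeval_frobeniusAlgHom_X_sub_one_apply, sub_ne_zero]
    exact pow_card_ne_self_of_one_lt_natDegree_minpoly (hf ▸ hdeg ▸ hnp.one_lt)
  have hXn : aeval σ (cyclotomic n F * (X - 1)) r = 0 := by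
    rw [cyclotomic_prime_mul_X_sub_one, ← hrank, aeval_frobeniusAlgHom_X_pow_finrank_sub_one]
  refine linearIndependent_pow_apply_of_aeval_ne_zero σ r n fun g hg hgn => ?_
  refine aeval_ne_zero_of_irreducible_mul σ r
    (irreducible_cyclotomic_of_orderOf_eq_totient hnp.ne_zero (by rwa [Nat.totient_prime hnp]))
    (by simpa using irreducible_X_sub_C (1 : F)) hXn hΦ hX1 hg ?_
  rwa [cyclotomic_prime_mul_X_sub_one, ← C_1, natDegree_X_pow_sub_C]

/-- Let q be a prime power of characteristic p and n a prime ≠ p such that q generates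
(ℤ/nℤ)^×. A monic irreducible polynomial f = X^n + a_1 X^{n-1} + ⋯ + a_n over F_q with
root r ∈ F_{q^n} has linearly independent roots r, r^q, ..., r^{q^{n-1}} over F_q iff
a_1 ≠ 0. -/
theorem stmt11 (p n : ℕ) (hp : p.Prime) (hnp : n.Prime) (hne : n ≠ p)
    (F K : Type*) [Field F] [Fintype F] [CharP F p] [Field K] [Algebra F K]
    (horder : orderOf ((Fintype.card F : ZMod n)) = n - 1)
    (hrank : Module.finrank F K = n)
    (f : Polynomial F) (hmonic : f.Monic) (hirr : Irreducible f) (hdeg : f.natDegree = n)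
    (r : K) (hr : Polynomial.aeval r f = 0) :
    LinearIndependent F (fun i : Fin n => r ^ (Fintype.card F) ^ (i : ℕ)) ↔
      f.coeff (n - 1) ≠ 0 :=
  stmt11_general n hnp F K horder hrank f hmonic hirr hdeg r hr
end

section
/- Let q be a prime power of characteristic p, and let n be a prime different from p such that q generates (ℤ/nℤ)^×. Let ε be a primitive n-th root of unity in an algebraic closure of F_q, and let α ∈ F_{q^n} with α ∉ F_q. Then for every i with 1 ≤ i ≤ n-1, the element ∑_{j=0}^{n-1} ε^{ij} α^{q^j} (computed in the algebraic closure) is nonzero. -/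
/-!
Put `R m = ∑ⱼ ε^(m j) α^(qʲ)`, a Lagrange resolvent. Frobenius gives `R (m q) = ε^(m q) (R m)^q`,
so the zeros of `R`, read modulo `n`, are stable under multiplication by `q`; as `q` generates
`(ℤ/nℤ)ˣ`, one zero at `i ≢ 0` forces `R m = 0` for every `m ≢ 0`. Fourier inversion
`∑ₘ R m = n α` then yields `n α = R 0 = Tr(α) ∈ F_q`, and `n ≠ 0` in characteristic `p`
since a primitive `n`-th root of unity exists.
-/

open Finset

theorem Finset.sum_range_succ_eq_of_eq {M : Type*} [AddCancelCommMonoid M] {g : ℕ → M} {n : ℕ}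
    (hg : g n = g 0) : ∑ j ∈ range n, g (j + 1) = ∑ j ∈ range n, g j := by
  rw [← add_left_inj (g 0), ← sum_range_succ', sum_range_succ, hg]

theorem ZMod.exists_pow_eq_of_orderOf_eq {n : ℕ} [Fact n.Prime] {a x : ZMod n}
    (ha : orderOf a = n - 1) (hx : x ≠ 0) : ∃ t : ℕ, a ^ t = x := by
  have hfin : IsOfFinOrder a :=
    orderOf_pos_iff.mp (by have := (Fact.out : n.Prime).two_le; omega)
  set u := hfin.isUnit.unit
  have hu : Subgroup.zpowers u = ⊤ := by
    apply Subgroup.eq_top_of_card_eq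
    rw [Nat.card_zpowers, ← orderOf_units, IsUnit.unit_spec, ha, Nat.card_eq_fintype_card,
      ZMod.card_units]
  obtain ⟨t, ht⟩ := (isOfFinOrder_of_finite u).mem_powers_iff_mem_zpowers.mpr
    (hu ▸ Subgroup.mem_top (Units.mk0 x hx))
  exact ⟨t, by simpa [u] using congrArg Units.val ht⟩

section LagrangeResolvent

variable {R : Type*} [Field R] (ε A : R) (q n : ℕ)

def lagrangeResolvent (m : ℕ) : R := ∑ j ∈ range n, ε ^ (m * j) * A ^ q ^ j

variable {ε A q n}

theorem lagrangeResolvent_congr (hε : ε ^ n = 1) {m m' : ℕ} (h : (m : ZMod n) = m') :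
    lagrangeResolvent ε A q n m = lagrangeResolvent ε A q n m' := by
  refine sum_congr rfl fun j _ => ?_
  have hεj : (ε ^ j) ^ n = 1 := by rw [← pow_mul, mul_comm, pow_mul, hε, one_pow]
  rw [mul_comm m, mul_comm m', pow_mul, pow_mul, pow_eq_pow_mod m hεj, pow_eq_pow_mod m' hεj,
    (ZMod.natCast_eq_natCast_iff' m m' n).mp h]

theorem sum_range_lagrangeResolvent (hε : IsPrimitiveRoot ε n) :
    ∑ m ∈ range n, lagrangeResolvent ε A q n m = n * A := by
  have hgeom : ∀ j ∈ range n, ∑ m ∈ range n, ε ^ (m * j) = if j = 0 then (n : R) else 0 := by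
    intro j hj
    split_ifs with hj0
    · simp [hj0]
    · simp_rw [mul_comm _ j, pow_mul]
      rw [geom_sum_eq (hε.pow_ne_one_of_pos_of_lt hj0 (mem_range.mp hj)), ← pow_mul,
        mul_comm, pow_mul, hε.pow_eq_one, one_pow, sub_self, zero_div]
  rcases n.eq_zero_or_pos with rfl | hn
  · simp
  simp_rw [lagrangeResolvent]
  rw [sum_comm]
  simp_rw [← sum_mul]
  rw [sum_congr rfl fun j hj => by rw [hgeom j hj], sum_eq_single_of_mem 0 (mem_range.mpr hn)]
  · simp
  · intro j _ hj0
    rw [if_neg hj0, zero_mul]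

variable (F : Type*) [Field F] [Fintype F] [Algebra F R]

theorem lagrangeResolvent_mul_card (hε : ε ^ n = 1) (hA : A ^ Fintype.card F ^ n = A) (m : ℕ) :
    lagrangeResolvent ε A (Fintype.card F) n (m * Fintype.card F) =
      ε ^ (m * Fintype.card F) * lagrangeResolvent ε A (Fintype.card F) n m ^ Fintype.card F := by
  set q := Fintype.card F
  have hfrob : lagrangeResolvent ε A q n m ^ q =
      ∑ j ∈ range n, ε ^ (m * j * q) * A ^ q ^ (j + 1) := by
    rw [lagrangeResolvent, ← FiniteField.frobeniusAlgHom_apply F, map_sum]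
    refine sum_congr rfl fun j _ => ?_
    rw [FiniteField.frobeniusAlgHom_apply, mul_pow, ← pow_mul, ← pow_mul, pow_succ]
  rw [hfrob, mul_sum, lagrangeResolvent,
    ← sum_range_succ_eq_of_eq (g := fun j => ε ^ (m * q * j) * A ^ q ^ j)]
  · refine sum_congr rfl fun j _ => ?_
    rw [← mul_assoc, ← pow_add]
    ring_nf
  · simp only [mul_zero, pow_zero, pow_one, one_mul, hA, mul_comm _ n, pow_mul, hε, one_pow]

variable {F}

theorem lagrangeResolvent_mul_card_pow_eq_zero (hε : ε ^ n = 1)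
    (hA : A ^ Fintype.card F ^ n = A) {m : ℕ}
    (hm : lagrangeResolvent ε A (Fintype.card F) n m = 0) (t : ℕ) :
    lagrangeResolvent ε A (Fintype.card F) n (m * Fintype.card F ^ t) = 0 := by
  induction t with
  | zero => simpa using hm
  | succ t ih =>
    rw [pow_succ, ← mul_assoc, lagrangeResolvent_mul_card F hε hA, ih,
      zero_pow Fintype.card_ne_zero, mul_zero]

theorem lagrangeResolvent_eq_zero_of_not_dvd [Fact n.Prime]
    (horder : orderOf (Fintype.card F : ZMod n) = n - 1) (hε : ε ^ n = 1)
    (hA : A ^ Fintype.card F ^ n = A) {i : ℕ} (hi : ¬ n ∣ i)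
    (hzero : lagrangeResolvent ε A (Fintype.card F) n i = 0) {m : ℕ} (hm : ¬ n ∣ m) :
    lagrangeResolvent ε A (Fintype.card F) n m = 0 := by
  rw [← ZMod.natCast_eq_zero_iff] at hi hm
  obtain ⟨t, ht⟩ := ZMod.exists_pow_eq_of_orderOf_eq horder (div_ne_zero hm hi)
  have hcongr : (m : ZMod n) = (i * Fintype.card F ^ t : ℕ) := by
    push_cast
    rw [ht, mul_div_cancel₀ _ hi]
  rw [lagrangeResolvent_congr hε hcongr, lagrangeResolvent_mul_card_pow_eq_zero hε hA hzero]

theorem lagrangeResolvent_zero_eq_of_eq_zero [Fact n.Prime]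
    (horder : orderOf (Fintype.card F : ZMod n) = n - 1) (hε : IsPrimitiveRoot ε n)
    (hA : A ^ Fintype.card F ^ n = A) {i : ℕ} (hi : ¬ n ∣ i)
    (hzero : lagrangeResolvent ε A (Fintype.card F) n i = 0) :
    lagrangeResolvent ε A (Fintype.card F) n 0 = n * A := by
  rw [← sum_range_lagrangeResolvent hε,
    sum_eq_single_of_mem 0 (mem_range.mpr (Fact.out : n.Prime).pos)]
  intro m hm hm0
  exact lagrangeResolvent_eq_zero_of_not_dvd horder hε.pow_eq_one hA hi hzero
    fun h => hm0 (Nat.eq_zero_of_dvd_of_lt h (mem_range.mp hm))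

end LagrangeResolvent

theorem stmt12_general (n : ℕ) (hnp : n.Prime)
    (F K Ω : Type*) [Field F] [Fintype F]
    [Field K] [Algebra F K] [Field Ω] [Algebra K Ω] [Algebra F Ω]
    (horder : orderOf ((Fintype.card F : ZMod n)) = n - 1)
    (hrank : Module.finrank F K = n)
    (ε : Ω) (hε : IsPrimitiveRoot ε n)
    (α : K) (hα : α ∉ Set.range (algebraMap F K)) :
    ∀ i : ℕ, 1 ≤ i → i ≤ n - 1 →
      ∑ j ∈ Finset.range n, ε ^ (i * j) * (algebraMap K Ω α) ^ (Fintype.card F) ^ j ≠ 0 := by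
  intro i hi1 hi2 hzero
  have : Fact n.Prime := ⟨hnp⟩
  have : NeZero n := ⟨hnp.ne_zero⟩
  have : Module.Finite F K := Module.finite_of_finrank_pos (hrank ▸ hnp.pos)
  have : Finite K := Module.finite_of_finite F
  have := Fintype.ofFinite K
  have hA : algebraMap K Ω α ^ Fintype.card F ^ n = algebraMap K Ω α := by
    rw [← map_pow, ← hrank, ← Module.card_eq_pow_finrank, FiniteField.pow_card]
  have hres := lagrangeResolvent_zero_eq_of_eq_zero horder hε hA
    (Nat.not_dvd_of_pos_of_lt hi1 (by omega)) hzero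
  have htrace : lagrangeResolvent ε (algebraMap K Ω α) (Fintype.card F) n 0 =
      algebraMap K Ω (algebraMap F K (Algebra.trace F K α)) := by
    simp [lagrangeResolvent, FiniteField.algebraMap_trace_eq_sum_pow, hrank,
      Nat.card_eq_fintype_card]
  have hn : (n : K) ≠ 0 := fun h =>
    hε.neZero'.out (by rw [← map_natCast (algebraMap K Ω), h, map_zero])
  have hnα : algebraMap F K (Algebra.trace F K α) = n * α :=
    (algebraMap K Ω).injective (by rw [← htrace, hres, map_mul, map_natCast])
  refine hα ⟨(n : F)⁻¹ * Algebra.trace F K α, ?_⟩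
  rw [map_mul, map_inv₀, map_natCast, hnα, inv_mul_cancel_left₀ hn]

/-- Let q be a prime power of characteristic p and n a prime ≠ p such that q generates
(ℤ/nℤ)^×. Let ε be a primitive n-th root of unity in an algebraic closure of F_q and
α ∈ F_{q^n} with α ∉ F_q. Then for all 1 ≤ i ≤ n-1, ∑_{j=0}^{n-1} ε^{ij} α^{q^j} ≠ 0. -/
theorem stmt12 (p n : ℕ) (hp : p.Prime) (hnp : n.Prime) (hne : n ≠ p)
    (F K Ω : Type*) [Field F] [Fintype F] [CharP F p]
    [Field K] [Algebra F K] [Field Ω] [Algebra K Ω] [Algebra F Ω] [IsScalarTower F K Ω]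
    [IsAlgClosed Ω] [Algebra.IsAlgebraic F Ω]
    (horder : orderOf ((Fintype.card F : ZMod n)) = n - 1)
    (hrank : Module.finrank F K = n)
    (ε : Ω) (hε : IsPrimitiveRoot ε n)
    (α : K) (hα : α ∉ Set.range (algebraMap F K)) :
    ∀ i : ℕ, 1 ≤ i → i ≤ n - 1 →
      ∑ j ∈ Finset.range n, ε ^ (i * j) * (algebraMap K Ω α) ^ (Fintype.card F) ^ j ≠ 0 :=
  stmt12_general n hnp F K Ω horder hrank ε hε α hα
end

section
/- Let q be a power of the prime p, let n ≥ 1, and write n = p^e t with p ∤ t. For each divisor d of t, let o_d(q) denote the multiplicative order of q in (ℤ/dℤ)^×, and let φ denote Euler's totient function. Then the number of elements x of F_{q^n} such that x, x^q, x^{q^2}, ..., x^{q^{n-1}} are linearly independent over F_q equals q^{(p^e - 1)t} · ∏_{d ∣ t} (q^{o_d(q)} - 1)^{φ(d)/o_d(q)}. -/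
/-!
Let `σ : x ↦ x ^ q` be the Frobenius of `K / F`; its minimal polynomial is `X ^ n - 1`. Viewed as
an `F[X]`-module through `σ`, `K` has an element whose annihilator is all of `(X ^ n - 1)`
(structure theorem over the PID `F[X]`), so `K ≅ R := F[X] ⧸ (X ^ n - 1)` with `X` acting as `σ`.
Under this isomorphism `x` is normal iff the `X ^ i * r` are independent, i.e. iff `r` is a unit,
so the count is `#Rˣ`. As `X ^ n - 1 = (X ^ t - 1) ^ (p ^ e)`, the kernel of
`R → F[X] ⧸ (X ^ t - 1)` is nilpotent, which gives the factor `q ^ ((p ^ e - 1) t)`. Finally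
`X ^ t - 1 = ∏_{d ∣ t} Φ_d` is squarefree, so by the Chinese remainder theorem its quotient is a
product of fields, `φ(d) / o_d(q)` of them of size `q ^ o_d(q)` for each `d`.
-/

open Polynomial
open scoped Function

theorem AddMonoidHom.natCard_preimage_of_surjective {G H : Type*} [AddCommGroup G]
    [AddCommGroup H] (f : G →+ H) (hf : Function.Surjective f) (S : Set H) :
    Nat.card (f ⁻¹' S) = Nat.card f.ker * Nat.card S := by
  let e := QuotientAddGroup.quotientKerEquivOfSurjective f hf
  have hpre : f ⁻¹' S = QuotientAddGroup.mk ⁻¹' (e ⁻¹' S) := by ext; rfl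
  rw [hpre, Nat.card_congr (QuotientAddGroup.preimageMkEquivAddSubgroupProdSet _ _),
    Nat.card_prod, Nat.card_preimage_of_injective e.injective (by simp [e.surjective.range_eq])]

theorem RingHom.isUnit_of_isUnit_map {A B : Type*} [CommRing A] [CommRing B] (π : A →+* B)
    (hπ : Function.Surjective π) (hnil : ∀ a ∈ RingHom.ker π, IsNilpotent a) {a : A}
    (ha : IsUnit (π a)) : IsUnit a := by
  obtain ⟨b, hb⟩ := hπ ha.unit⁻¹.val
  have hab : IsNilpotent (a * b - 1) :=
    hnil _ (by rw [RingHom.mem_ker, map_sub, map_mul, hb, map_one, IsUnit.mul_val_inv, sub_self])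
  exact isUnit_of_mul_isUnit_left (by simpa using hab.isUnit_add_one)

theorem RingHom.natCard_units_eq_card_ker_mul {A B : Type*} [CommRing A] [CommRing B]
    (π : A →+* B) (hπ : Function.Surjective π) (hnil : ∀ a ∈ RingHom.ker π, IsNilpotent a) :
    Nat.card Aˣ = Nat.card (RingHom.ker π) * Nat.card Bˣ := by
  have hunits : Set.range (Units.val : Aˣ → A) = π.toAddMonoidHom ⁻¹' Set.range Units.val := by
    ext a
    exact ⟨fun h => IsUnit.map π h, π.isUnit_of_isUnit_map hπ hnil⟩
  rw [← Nat.card_range_of_injective Units.val_injective, hunits,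
    π.toAddMonoidHom.natCard_preimage_of_surjective hπ,
    Nat.card_range_of_injective Units.val_injective]
  rfl

theorem Ideal.natCard_units_quotient_span_prod {R ι : Type*} [CommRing R] (s : Finset ι)
    (g : ι → R) (hg : Set.Pairwise s (IsCoprime on g)) :
    Nat.card (R ⧸ Ideal.span {∏ i ∈ s, g i})ˣ = ∏ i ∈ s, Nat.card (R ⧸ Ideal.span {g i})ˣ := by
  have hspan : Ideal.span {∏ i ∈ s, g i} = ⨅ i : s, Ideal.span {g i} := by
    rw [iInf_span_singleton, ← Finset.prod_coe_sort]
    exact fun i j hij => hg i.2 j.2 (Subtype.coe_ne_coe.mpr hij)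
  have hcop : Pairwise (IsCoprime on fun i : s => Ideal.span {g i}) := fun i j hij =>
    (Ideal.isCoprime_span_singleton_iff _ _).mpr (hg i.2 j.2 (Subtype.coe_ne_coe.mpr hij))
  rw [Nat.card_congr (Units.mapEquiv ((Ideal.quotEquivOfEq hspan).trans
      (Ideal.quotientInfRingEquivPiQuotient _ hcop)).toMulEquiv).toEquiv,
    Nat.card_congr MulEquiv.piUnits.toEquiv, Nat.card_pi,
    Finset.prod_coe_sort s fun i => Nat.card (R ⧸ Ideal.span {g i})ˣ]

theorem Finset.pairwise_isCoprime_of_squarefree_prod {R ι : Type*} [CommRing R] [IsBezout R]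
    {s : Finset ι} {g : ι → R} (h : Squarefree (∏ i ∈ s, g i)) :
    Set.Pairwise s (IsCoprime on g) := by
  classical
  intro i hi j hj hij
  have hdvd : g i * g j ∣ ∏ i ∈ s, g i := by
    rw [← Finset.mul_prod_erase s g hi]
    exact mul_dvd_mul_left _ (Finset.dvd_prod_of_mem g (Finset.mem_erase.mpr ⟨hij.symm, hj⟩))
  exact IsRelPrime.isCoprime fun d hdi hdj => h d ((mul_dvd_mul hdi hdj).trans hdvd)

theorem Module.Basis.linearIndependent_mul_iff_isUnit {F A ι : Type*} [Field F] [CommRing A]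
    [Algebra F A] [Fintype ι] (b : Module.Basis ι F A) (r : A) :
    LinearIndependent F (fun i => b i * r) ↔ IsUnit r := by
  refine ⟨fun hli => ?_, fun hr => b.linearIndependent.map' (LinearMap.mulRight F r)
    (LinearMap.ker_eq_bot.mpr hr.mul_left_injective)⟩
  have := Module.Finite.of_basis b
  have hspan := hli.span_eq_top_of_card_eq_finrank' (Module.finrank_eq_card_basis b).symm
  have hle : Submodule.span F (Set.range fun i => b i * r)
      ≤ LinearMap.range (LinearMap.mulRight F r) :=
    Submodule.span_le.mpr (Set.range_subset_iff.mpr fun i => ⟨b i, rfl⟩)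
  obtain ⟨y, hy⟩ := hle (hspan ▸ Submodule.mem_top (x := (1 : A)))
  exact isUnit_iff_exists_inv'.mpr ⟨y, hy⟩

namespace Polynomial

theorem natDegree_X_pow_sub_one {R : Type*} [Ring R] [Nontrivial R] (n : ℕ) :
    (X ^ n - 1 : R[X]).natDegree = n := by
  simpa using natDegree_X_pow_sub_C (n := n) (r := (1 : R))

theorem X_pow_sub_one_ne_zero {R : Type*} [Ring R] [Nontrivial R] {n : ℕ} (hn : 0 < n) :
    (X ^ n - 1 : R[X]) ≠ 0 := by
  simpa using X_pow_sub_C_ne_zero hn (1 : R)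

variable {F : Type*} [Field F] [Fintype F]

theorem natCard_quotient_span_singleton {g : F[X]} (hg : g ≠ 0) :
    Nat.card (F[X] ⧸ Ideal.span {g}) = Fintype.card F ^ g.natDegree := by
  let pb : PowerBasis F (AdjoinRoot g) := AdjoinRoot.powerBasis hg
  have : Module.Finite F (AdjoinRoot g) := pb.finite
  change Nat.card (AdjoinRoot g) = _
  rw [Module.natCard_eq_pow_finrank (K := F), pb.finrank, AdjoinRoot.powerBasis_dim,
    Nat.card_eq_fintype_card]

theorem natCard_units_quotient_span_pow {g : F[X]} (hg : g ≠ 0) {m : ℕ} (hm : m ≠ 0) :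
    Nat.card (F[X] ⧸ Ideal.span {g ^ m})ˣ
      = Fintype.card F ^ ((m - 1) * g.natDegree) * Nat.card (F[X] ⧸ Ideal.span {g})ˣ := by
  let π := Ideal.Quotient.factor (Ideal.span_singleton_le_span_singleton.mpr (dvd_pow_self g hm))
  have hπ : Function.Surjective π := Ideal.Quotient.factor_surjective _
  have hnil : ∀ a ∈ RingHom.ker π, IsNilpotent a := by
    intro a ha
    obtain ⟨b, rfl⟩ := Ideal.Quotient.mk_surjective a
    rw [RingHom.mem_ker, Ideal.Quotient.factor_mk, Ideal.Quotient.eq_zero_iff_dvd] at ha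
    exact ⟨m, by rw [← map_pow, Ideal.Quotient.eq_zero_iff_dvd]; exact pow_dvd_pow_of_dvd ha m⟩
  have hker : Nat.card (RingHom.ker π) = Fintype.card F ^ ((m - 1) * g.natDegree) := by
    have hcard := π.toAddMonoidHom.natCard_preimage_of_surjective hπ Set.univ
    rw [Set.preimage_univ, Nat.card_univ, Nat.card_univ,
      natCard_quotient_span_singleton (pow_ne_zero m hg), natCard_quotient_span_singleton hg,
      natDegree_pow] at hcard
    refine Nat.eq_of_mul_eq_mul_right (pow_pos (Fintype.card_pos (α := F)) g.natDegree) ?_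
    rw [← pow_add, ← add_one_mul, Nat.sub_add_cancel (Nat.one_le_iff_ne_zero.mpr hm), hcard]
    rfl
  rw [π.natCard_units_eq_card_ker_mul hπ hnil, hker]

open UniqueFactorizationMonoid in
theorem natCard_units_quotient_span_of_squarefree [DecidableEq F] {g : F[X]} (hg : Squarefree g) :
    Nat.card (F[X] ⧸ Ideal.span {g})ˣ
      = ∏ f ∈ (normalizedFactors g).toFinset, (Fintype.card F ^ f.natDegree - 1) := by
  have hnodup := (squarefree_iff_nodup_normalizedFactors hg.ne_zero).mp hg
  have hspan : Ideal.span {g} = Ideal.span {∏ f ∈ (normalizedFactors g).toFinset, f} := by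
    rw [Finset.prod_eq_multiset_prod, Multiset.toFinset_val, hnodup.dedup, Multiset.map_id']
    exact Ideal.span_singleton_eq_span_singleton.mpr (prod_normalizedFactors hg.ne_zero).symm
  have hcop : Set.Pairwise ((normalizedFactors g).toFinset : Set F[X])
      (IsCoprime on fun f => f) := by
    intro f hf f' hf' hne
    rw [Finset.mem_coe, Multiset.mem_toFinset] at hf hf'
    refine (irreducible_of_normalized_factor f hf).coprime_iff_not_dvd.mpr fun hdvd => hne ?_
    exact mem_normalizedFactors_eq_of_associated hf hf'
      ((irreducible_of_normalized_factor f hf).associated_of_dvd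
        (irreducible_of_normalized_factor f' hf') hdvd)
  rw [hspan, Ideal.natCard_units_quotient_span_prod _ (fun f => f) hcop]
  refine Finset.prod_congr rfl fun f hf => ?_
  have hirr := irreducible_of_normalized_factor f (Multiset.mem_toFinset.mp hf)
  have := PrincipalIdealRing.isMaximal_of_irreducible hirr
  let := Ideal.Quotient.field (Ideal.span {f})
  rw [Nat.card_units, natCard_quotient_span_singleton hirr.ne_zero]

theorem natCard_units_quotient_span_cyclotomic {d : ℕ} (hd : (Fintype.card F).Coprime d) :
    Nat.card (F[X] ⧸ Ideal.span {cyclotomic d F})ˣ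
      = (Fintype.card F ^ orderOf (Fintype.card F : ZMod d) - 1)
          ^ (d.totient / orderOf (Fintype.card F : ZMod d)) := by
  classical
  obtain ⟨p, _, k, hp, hcard⟩ := FiniteField.card' F
  have : Fact p.Prime := ⟨hp⟩
  have hpd : p.Coprime d := Nat.Coprime.coprime_dvd_left (hcard ▸ dvd_pow_self p k.ne_zero) hd
  have horder : orderOf (ZMod.unitOfCoprime _ (hpd.pow_left k))
      = orderOf (Fintype.card F : ZMod d) := by
    rw [← orderOf_units, ZMod.coe_unitOfCoprime, hcard]
  have : NeZero (d : F) :=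
    ⟨fun h0 => hp.coprime_iff_not_dvd.mp hpd ((CharP.cast_eq_zero_iff F p d).mp h0)⟩
  rw [natCard_units_quotient_span_of_squarefree (squarefree_cyclotomic d F),
    Finset.prod_congr rfl fun f hf => by
      rw [natDegree_of_mem_normalizedFactors_cyclotomic hcard hpd (Multiset.mem_toFinset.mp hf),
        horder],
    Finset.prod_const, normalizedFactors_cyclotomic_card hcard hpd, horder]

end Polynomial

namespace FiniteField

variable (F K : Type*) [Field F] [Fintype F] [Field K] [Algebra F K] [Finite K]

theorem exists_linearEquiv_quotient_frobenius :
    ∃ φ : (F[X] ⧸ Ideal.span {(X ^ Module.finrank F K - 1 : F[X])}) ≃ₗ[F] K,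
      ∀ (i : ℕ) (r : F[X] ⧸ Ideal.span {(X ^ Module.finrank F K - 1 : F[X])}),
        φ (Ideal.Quotient.mk _ X ^ i * r) = φ r ^ Fintype.card F ^ i := by
  set σ := (frobeniusAlgHom F K).toLinearMap
  obtain ⟨x, hx⟩ := Module.exists_ker_toSpanSingleton_eq_annihilator F[X] (Module.AEval' σ)
  rw [← span_minpoly_eq_annihilator, minpoly_frobeniusAlgHom] at hx
  let ψ := Submodule.liftQ _ (LinearMap.toSpanSingleton F[X] _ x) hx.ge
  have hinj : Function.Injective ψ :=
    LinearMap.ker_eq_bot.mp (Submodule.ker_liftQ_eq_bot' _ _ hx.symm)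
  have : Finite (Module.AEval' σ) := Finite.of_equiv K (Module.AEval'.of σ).toEquiv
  have hbij : Function.Bijective ψ := hinj.bijective_of_nat_card_le <| by
    rw [← Nat.card_congr (Module.AEval'.of σ).toEquiv, Module.natCard_eq_pow_finrank (K := F),
      natCard_quotient_span_singleton (X_pow_sub_one_ne_zero Module.finrank_pos),
      natDegree_X_pow_sub_one, Nat.card_eq_fintype_card]
  refine ⟨((LinearEquiv.ofBijective ψ hbij).restrictScalars F).trans (Module.AEval'.of σ).symm,
    fun i r => ?_⟩
  have hsmul : Ideal.Quotient.mk _ X ^ i * r = (X ^ i : F[X]) • r := by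
    obtain ⟨g, rfl⟩ := Ideal.Quotient.mk_surjective r
    rw [← map_pow, ← map_mul]
    rfl
  simp only [LinearEquiv.trans_apply, LinearEquiv.restrictScalars_apply,
    LinearEquiv.ofBijective_apply]
  rw [hsmul, map_smul]
  obtain ⟨y, hy⟩ := (Module.AEval'.of σ).surjective (ψ r)
  rw [← hy, Module.AEval'.X_pow_smul_of, LinearEquiv.symm_apply_apply,
    LinearEquiv.symm_apply_apply, Module.End.smul_def, Module.End.pow_apply]
  exact congrFun (pow_iterate (Fintype.card F) i) y

theorem natCard_linearIndependent_pow_card_pow :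
    Nat.card {x : K // LinearIndependent F
        (fun i : Fin (Module.finrank F K) => x ^ Fintype.card F ^ (i : ℕ))}
      = Nat.card (F[X] ⧸ Ideal.span {(X ^ Module.finrank F K - 1 : F[X])})ˣ := by
  obtain ⟨φ, hφ⟩ := exists_linearEquiv_quotient_frobenius F K
  let pb : PowerBasis F (F[X] ⧸ Ideal.span {(X ^ Module.finrank F K - 1 : F[X])}) :=
    AdjoinRoot.powerBasis (X_pow_sub_one_ne_zero Module.finrank_pos)
  let b := pb.basis.reindex (finCongr (natDegree_X_pow_sub_one _))
  have hb : ∀ i, b i = Ideal.Quotient.mk _ X ^ (i : ℕ) := fun i => by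
    rw [Module.Basis.reindex_apply, PowerBasis.coe_basis]
    rfl
  have hiff : ∀ r, IsUnit r ↔ LinearIndependent F
      (fun i : Fin (Module.finrank F K) => φ r ^ Fintype.card F ^ (i : ℕ)) := by
    intro r
    rw [← b.linearIndependent_mul_iff_isUnit r,
      ← LinearMap.linearIndependent_iff φ.toLinearMap φ.ker]
    simp [Function.comp_def, hb, hφ]
  rw [Nat.card_congr (Equiv.subtypeEquiv φ.toEquiv hiff).symm]
  exact Nat.card_range_of_injective Units.val_injective

end FiniteField

/-- Let q be a power of the prime p, n = p^e t with p ∤ t. The number of x ∈ F_{q^n}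
whose conjugates x, x^q, ..., x^{q^{n-1}} are linearly independent over F_q equals
q^{(p^e-1)t} ∏_{d ∣ t} (q^{o_d(q)} - 1)^{φ(d)/o_d(q)}. -/
theorem stmt13 (p e t n : ℕ) (hp : p.Prime) (hpt : ¬ p ∣ t) (ht : 0 < t)
    (hn : n = p ^ e * t)
    (F K : Type*) [Field F] [Fintype F] [CharP F p] [Field K] [Algebra F K]
    (hrank : Module.finrank F K = n) :
    Nat.card {x : K // LinearIndependent F
        (fun i : Fin n => x ^ (Fintype.card F) ^ (i : ℕ))}
      = (Fintype.card F) ^ ((p ^ e - 1) * t) *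
        ∏ d ∈ t.divisors,
          ((Fintype.card F) ^ (orderOf ((Fintype.card F : ZMod d))) - 1) ^
            (Nat.totient d / orderOf ((Fintype.card F : ZMod d))) := by
  have : Fact p.Prime := ⟨hp⟩
  have : Module.Finite F K :=
    Module.finite_of_finrank_pos (by rw [hrank, hn]; exact Nat.mul_pos (pow_pos hp.pos e) ht)
  have : Finite K := Module.finite_of_finite F
  obtain ⟨k, -, hcard⟩ := FiniteField.card F p
  have hcop : ∀ d ∈ t.divisors, (Fintype.card F).Coprime d := fun d hd =>
    hcard ▸ Nat.Coprime.pow_left _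
      (hp.coprime_iff_not_dvd.mpr fun h => hpt (h.trans (Nat.dvd_of_mem_divisors hd)))
  have hXn : (X ^ n - 1 : F[X]) = (X ^ t - 1) ^ p ^ e := by
    rw [sub_pow_char_pow, one_pow, ← pow_mul, mul_comm, hn]
  have hXt : (X ^ t - 1 : F[X]) = ∏ d ∈ t.divisors, cyclotomic d F :=
    (prod_cyclotomic_eq_X_pow_sub_one ht F).symm
  have hsq : Squarefree (X ^ t - 1 : F[X]) :=
    (X_pow_sub_one_separable_iff.mpr fun h => hpt ((CharP.cast_eq_zero_iff F p t).mp h)).squarefree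
  rw [← hrank, FiniteField.natCard_linearIndependent_pow_card_pow, hrank, hXn,
    natCard_units_quotient_span_pow hsq.ne_zero (pow_ne_zero e hp.ne_zero),
    natDegree_X_pow_sub_one, hXt, Ideal.natCard_units_quotient_span_prod _ _
      (Finset.pairwise_isCoprime_of_squarefree_prod (hXt ▸ hsq))]
  exact congrArg _
    (Finset.prod_congr rfl fun d hd => natCard_units_quotient_span_cyclotomic (hcop d hd))
end

section
/- Let q be a prime power, n ≥ 1, and K = F_{q^n} viewed as an extension of F_q. For a polynomial g = ∑_i c_i X^i ∈ F_q[X], define g(ρ)(x) = ∑_i c_i x^{q^i} for x ∈ K, where ρ is the q-power Frobenius. Then for x ∈ K, the conjugates x, x^q, ..., x^{q^{n-1}} are linearly independent over F_q if and only if for every monic polynomial g ∈ F_q[X] dividing X^n - 1 with g ≠ X^n - 1, one has g(ρ)(x) ≠ 0. -/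
/-!
With ρ the Frobenius, g(ρ)(x) is `aeval ρ g x` and the conjugates of x are the vectors ρ^i x,
i < n. They are independent iff no nonzero polynomial of degree < n annihilates x. Since ρ^n = id,
X^n - 1 annihilates x, and by Bézout so does the monic gcd of X^n - 1 with any annihilating
polynomial; a nonzero annihilator of degree < n thus yields a proper monic divisor of X^n - 1
annihilating x, and conversely such a divisor has degree < n.
-/

open Polynomial

section CyclicVector

variable {R M : Type*} [CommRing R] [AddCommGroup M] [Module R M]

theorem aeval_endomorphism_eq_sum_fin (f : Module.End R M) (v : M) {n : ℕ} {g : R[X]}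
    (hg : g.degree < n) : aeval f g v = ∑ i : Fin n, g.coeff i • (f ^ (i : ℕ)) v := by
  rw [aeval_endomorphism, sum_fin (fun i c => c • (f ^ i) v) (fun _ => zero_smul R _) hg]

theorem linearIndependent_pow_apply_iff_forall_degree_lt (f : Module.End R M) (v : M) (n : ℕ) :
    LinearIndependent R (fun i : Fin n => (f ^ (i : ℕ)) v) ↔
      ∀ g : R[X], g.degree < n → aeval f g v = 0 → g = 0 := by
  rw [Fintype.linearIndependent_iff]
  constructor
  · intro h g hg hgv
    ext i
    by_cases hi : i < n
    · exact h (fun j => g.coeff j) (by rwa [← aeval_endomorphism_eq_sum_fin f v hg]) ⟨i, hi⟩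
    · exact coeff_eq_zero_of_degree_lt (hg.trans_le (by exact_mod_cast not_lt.1 hi))
  · intro h c hc i
    set g := (degreeLTEquiv R n).symm c
    have hcg : c = fun j : Fin n => g.1.coeff j := ((degreeLTEquiv R n).apply_symm_apply c).symm
    have hdeg : g.1.degree < n := mem_degreeLT.1 g.2
    rw [hcg] at hc ⊢
    simp [h g.1 hdeg (by rw [aeval_endomorphism_eq_sum_fin f v hdeg, hc])]

variable {F V : Type*} [Field F] [AddCommGroup V] [Module F V]

theorem linearIndependent_pow_apply_iff_forall_monic_dvd {f : Module.End F V} {v : V} {P : F[X]}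
    {n : ℕ} (hP : P.Monic) (hPn : P.natDegree = n) (hPv : aeval f P v = 0) :
    LinearIndependent F (fun i : Fin n => (f ^ (i : ℕ)) v) ↔
      ∀ g : F[X], g.Monic → g ∣ P → g ≠ P → aeval f g v ≠ 0 := by
  classical
  have hPdeg : P.degree = n := by rw [degree_eq_natDegree hP.ne_zero, hPn]
  rw [linearIndependent_pow_apply_iff_forall_degree_lt, ← hPdeg]
  constructor
  · intro h g hg hgP hne hgv
    refine hg.ne_zero (h g (lt_of_le_of_ne (degree_le_of_dvd hgP hP.ne_zero) fun hdeg => hne ?_) hgv)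
    exact (eq_of_monic_of_dvd_of_natDegree_le hg hP hgP (natDegree_le_natDegree hdeg.ge)).symm
  · intro h g hg hgv
    by_contra hg0
    set d := gcd g P
    have hdm : d.Monic := by
      simpa [d, normalize_gcd] using monic_normalize (gcd_ne_zero_of_right hP.ne_zero : d ≠ 0)
    obtain ⟨a, b, hab⟩ : ∃ a b, d = a * g + b * P := by
      obtain ⟨a, b, hab⟩ := exists_gcd_eq_mul_add_mul g P
      exact ⟨a, b, hab.trans (by ring)⟩
    have hdv : aeval f d v = 0 := by
      rw [hab]
      simp [Module.End.mul_apply, hgv, hPv]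
    refine h d hdm (gcd_dvd_right g P) (fun hdP => ?_) hdv
    exact (degree_le_of_dvd (hdP ▸ gcd_dvd_left g P) hg0).not_gt hg

end CyclicVector

theorem FiniteField.frobeniusAlgHom_toLinearMap_pow_apply (K R : Type*) [Field K] [Fintype K]
    [CommRing R] [Algebra K R] (i : ℕ) (y : R) :
    ((FiniteField.frobeniusAlgHom K R).toLinearMap ^ i) y = y ^ Fintype.card K ^ i := by
  rw [Module.End.pow_apply, AlgHom.coe_toLinearMap, FiniteField.coe_frobeniusAlgHom, pow_iterate]

/-- Let q be a prime power and K = F_{q^n}. For g = ∑ c_i X^i ∈ F_q[X] write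
g(ρ)(x) = ∑ c_i x^{q^i}. Then the conjugates x, x^q, ..., x^{q^{n-1}} of x ∈ K are
linearly independent over F_q iff g(ρ)(x) ≠ 0 for every monic g ∣ X^n - 1 with
g ≠ X^n - 1. -/
theorem stmt15 (F K : Type*) [Field F] [Fintype F] [Field K] [Algebra F K]
    (n : ℕ) (hn : 0 < n) (hrank : Module.finrank F K = n) (x : K) :
    LinearIndependent F (fun i : Fin n => x ^ (Fintype.card F) ^ (i : ℕ)) ↔
      ∀ g : Polynomial F, g.Monic → g ∣ (Polynomial.X ^ n - 1) →
        g ≠ Polynomial.X ^ n - 1 →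
        (g.sum fun i c => c • x ^ (Fintype.card F) ^ i) ≠ 0 := by
  have : FiniteDimensional F K := .of_finrank_pos (hrank ▸ hn)
  have : Finite K := Module.finite_of_finite F
  have : Fintype K := Fintype.ofFinite K
  set ρ := (FiniteField.frobeniusAlgHom F K).toLinearMap
  have hρ (i : ℕ) (y : K) : (ρ ^ i) y = y ^ Fintype.card F ^ i :=
    FiniteField.frobeniusAlgHom_toLinearMap_pow_apply F K i y
  have hρn : (ρ ^ n) x = x := by
    rw [hρ, ← hrank, ← Module.card_eq_pow_finrank, FiniteField.pow_card]
  have hsum (g : F[X]) : (g.sum fun i c => c • x ^ Fintype.card F ^ i) = aeval ρ g x := by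
    simp only [aeval_endomorphism, hρ]
  simp_rw [hsum, ← hρ]
  exact linearIndependent_pow_apply_iff_forall_monic_dvd (monic_X_pow_sub_C 1 hn.ne')
    natDegree_X_pow_sub_C (by simp [hρn])
end

section
/- Let q be a prime power and let f = X^2 + aX + b be a monic irreducible polynomial over F_q, with root r in F_{q^2}. If a · (4b - a^2) ≠ 0, then the two roots r and r^q of f are linearly independent over F_q (i.e., f is normal over F_q). -/
/-!
A root `r` of an irreducible quadratic over `F = 𝔽_q` lies outside `F`, so the Frobenius
conjugate `r ^ q`, again a root, differs from `r`; by Vieta it equals `-a - r`. A relation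
`s r + t (-a - r) = 0` gives `(s - t) r = t a`, which forces `s = t` (as `r ∉ F`) and then
`t = 0` (as `a ≠ 0`).
-/

open Polynomial

namespace FiniteField

variable {F K : Type*} [Field F] [Fintype F]

theorem splits_X_pow_card_sub_X_self : (X ^ Fintype.card F - X : F[X]).Splits := by
  rw [splits_iff_card_roots, roots_X_pow_card_sub_X,
    X_pow_card_sub_X_natDegree_eq F Fintype.one_lt_card]
  rfl

variable [Field K] [Algebra F K]

theorem mem_range_algebraMap_of_pow_card_eq {x : K} (hx : x ^ Fintype.card F = x) :
    x ∈ (algebraMap F K).range :=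
  splits_X_pow_card_sub_X_self.mem_range_of_isRoot
    (X_pow_card_sub_X_ne_zero F Fintype.one_lt_card) (by simp [hx])

theorem aeval_pow_card_eq_zero {f : F[X]} {x : K} (hx : aeval x f = 0) :
    aeval (x ^ Fintype.card F) f = 0 := by
  rw [← expand_aeval, expand_card, map_pow, hx, zero_pow Fintype.card_ne_zero]

end FiniteField

namespace Polynomial

theorem Irreducible.notMem_range_algebraMap_of_aeval_eq_zero {F K : Type*} [Field F] [Ring K]
    [Nontrivial K] [Algebra F K] {p : F[X]} (hp : Irreducible p) (hdeg : p.natDegree ≠ 1) {x : K}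
    (hx : aeval x p = 0) : x ∉ (algebraMap F K).range := by
  rintro ⟨y, rfl⟩
  have hy : p.IsRoot y := by
    rw [aeval_algebraMap_apply, map_eq_zero_iff _ (algebraMap F K).injective] at hx
    exact hx
  exact hdeg (natDegree_eq_of_degree_eq_some (degree_eq_one_of_irreducible_of_root hp hy))

theorem eq_neg_sub_of_aeval_quadratic {R A : Type*} [CommRing R] [CommRing A] [IsDomain A]
    [Algebra R A] {a b : R} {x y : A} (hx : aeval x (X ^ 2 + C a * X + C b) = 0)
    (hy : aeval y (X ^ 2 + C a * X + C b) = 0) (hxy : y ≠ x) : y = -algebraMap R A a - x := by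
  simp only [map_add, map_mul, map_pow, aeval_X, aeval_C] at hx hy
  have hfactor : (y - x) * (y + x + algebraMap R A a) = 0 := by linear_combination hy - hx
  linear_combination (mul_eq_zero.mp hfactor).resolve_left (sub_ne_zero.mpr hxy)

end Polynomial

theorem linearIndependent_pair_neg_algebraMap_sub {F K : Type*} [Field F] [Ring K] [Nontrivial K]
    [Algebra F K] {x : K} (hx : x ∉ (algebraMap F K).range) {a : F} (ha : a ≠ 0) :
    LinearIndependent F ![x, -algebraMap F K a - x] := by
  rw [LinearIndependent.pair_iff]
  intro s t hst
  have hrel : (s - t) • x = algebraMap F K (t * a) := by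
    rw [map_mul, ← Algebra.smul_def, sub_smul]
    linear_combination (norm := module) hst
  obtain rfl | hne := eq_or_ne s t
  · rw [sub_self, zero_smul, eq_comm, map_eq_zero_iff _ (algebraMap F K).injective] at hrel
    have hs : s = 0 := (mul_eq_zero.mp hrel).resolve_right ha
    exact ⟨hs, hs⟩
  · refine absurd ⟨(s - t)⁻¹ * (t * a), ?_⟩ hx
    rw [map_mul, ← Algebra.smul_def, ← hrel, smul_smul, inv_mul_cancel₀ (sub_ne_zero.mpr hne),
      one_smul]

open FiniteField in
theorem stmt16_general (F K : Type*) [Field F] [Fintype F] [Field K] [Algebra F K]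
    (a b : F)
    (hirr : Irreducible (Polynomial.X ^ 2 + Polynomial.C a * Polynomial.X + Polynomial.C b))
    (r : K)
    (hr : Polynomial.aeval r (Polynomial.X ^ 2 + Polynomial.C a * Polynomial.X + Polynomial.C b) = 0)
    (h : a * (4 * b - a ^ 2) ≠ 0) :
    LinearIndependent F (fun i : Fin 2 => r ^ (Fintype.card F) ^ (i : ℕ)) := by
  have hdeg : (X ^ 2 + C a * X + C b).natDegree = 2 := by compute_degree!
  have hrF : r ∉ (algebraMap F K).range :=
    hirr.notMem_range_algebraMap_of_aeval_eq_zero (by rw [hdeg]; decide) hr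
  have hconj : r ^ Fintype.card F = -algebraMap F K a - r :=
    eq_neg_sub_of_aeval_quadratic hr (aeval_pow_card_eq_zero hr)
      fun hfix ↦ hrF (mem_range_algebraMap_of_pow_card_eq hfix)
  have hpair : (fun i : Fin 2 => r ^ (Fintype.card F) ^ (i : ℕ)) = ![r, r ^ Fintype.card F] := by
    ext i; fin_cases i <;> simp
  rw [hpair, hconj]
  exact linearIndependent_pair_neg_algebraMap_sub hrF (left_ne_zero_of_mul h)

/-- Let f = X^2 + aX + b be monic irreducible over F_q with root r ∈ F_{q^2}. If
a(4b - a²) ≠ 0 then the roots r, r^q are linearly independent over F_q. -/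
theorem stmt16 (F K : Type*) [Field F] [Fintype F] [Field K] [Algebra F K]
    (hrank : Module.finrank F K = 2) (a b : F)
    (hirr : Irreducible (Polynomial.X ^ 2 + Polynomial.C a * Polynomial.X + Polynomial.C b))
    (r : K)
    (hr : Polynomial.aeval r (Polynomial.X ^ 2 + Polynomial.C a * Polynomial.X + Polynomial.C b) = 0)
    (h : a * (4 * b - a ^ 2) ≠ 0) :
    LinearIndependent F (fun i : Fin 2 => r ^ (Fintype.card F) ^ (i : ℕ)) :=
  stmt16_general F K a b hirr r hr h
end

section
/- Let q be a prime power and let f = X^3 + aX^2 + bX + c be a monic irreducible polynomial over F_q, with root r in F_{q^3}. If a · (a^2 - 3b) ≠ 0, then the three roots r, r^q, r^{q^2} of f are linearly independent over F_q (i.e., f is normal over F_q). -/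
/-!
Write `σ` for the Frobenius `x ↦ x ^ q` of `K / F`, so that `σ ^ 3 = 1`. Applying `σ` and `σ ^ 2`
to a relation `w₀ r + w₁ σ r + w₂ σ² r = 0` gives a linear system for `w` whose matrix is
`(σ ^ (i + j) r)ᵢⱼ`. This circulant-type matrix has determinant `-e₁ (e₁² - 3 e₂)`, where `eₖ`
are the elementary symmetric functions of `r, σ r, σ² r`. Since these are the roots of `f`,
Vieta gives `e₁ = -a` and `e₂ = b`, so the determinant is `a (a² - 3 b) ≠ 0` and `w = 0`.
Vieta is available because `minpoly F r = ∏ (X - σⁱ r)`: the product is fixed by `σ`, so its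
coefficients lie in `F`.
-/

open Polynomial

theorem linearIndependent_pow_apply_of_det_ne_zero {F K : Type*} [Field F] [CommRing K]
    [IsDomain K] [Algebra F K] {n : ℕ} (σ : K →ₐ[F] K) (r : K)
    (hdet : (Matrix.of fun i j : Fin n => (σ ^ ((i : ℕ) + j)) r).det ≠ 0) :
    LinearIndependent F fun i : Fin n => (σ ^ (i : ℕ)) r := by
  rw [Fintype.linearIndependent_iff]
  intro w hw
  have hker : (Matrix.of fun i j : Fin n => (σ ^ ((i : ℕ) + j)) r).mulVec
      (fun j => algebraMap F K (w j)) = 0 := by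
    funext i
    have := congrArg (σ ^ (i : ℕ)) hw
    simp only [map_sum, map_zero, AlgHom.map_smul_of_tower, ← AlgHom.mul_apply, ← pow_add] at this
    simpa [Matrix.mulVec, dotProduct, Algebra.smul_def, mul_comm] using this
  intro i
  exact (map_eq_zero_iff _ (algebraMap F K).injective).mp
    (congrFun (Matrix.eq_zero_of_mulVec_eq_zero hdet hker) i)

theorem Matrix.det_of_add_of_periodic_three {R : Type*} [CommRing R] (x : ℕ → R)
    (hx : Function.Periodic x 3) :
    (Matrix.of fun i j : Fin 3 => x (i + j)).det =
      -(x 0 + x 1 + x 2) * ((x 0 + x 1 + x 2) ^ 2 - 3 * (x 0 * x 1 + x 0 * x 2 + x 1 * x 2)) := by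
  have h3 : x 3 = x 0 := hx 0
  have h4 : x 4 = x 1 := hx 1
  simp [Matrix.det_fin_three, h3, h4]
  ring

namespace FiniteField

variable {F K : Type*} [Field F] [Fintype F] [Field K] [Finite K] [Algebra F K]

theorem mem_range_algebraMap_of_frobeniusAlgHom_apply_eq {y : K}
    (hy : frobeniusAlgHom F K y = y) : y ∈ Set.range (algebraMap F K) := by
  refine (IsGalois.mem_range_algebraMap_iff_fixed y).2 fun g => ?_
  obtain ⟨n, rfl⟩ := (bijective_frobeniusAlgEquivOfAlgebraic_pow F K).2 g
  rw [AlgEquiv.coe_pow]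
  exact Function.iterate_fixed hy _

theorem prod_X_sub_C_frobeniusAlgHom_pow_mem_lifts (r : K) :
    ∏ i ∈ Finset.range (Module.finrank F K), (X - C ((frobeniusAlgHom F K ^ i) r)) ∈
      lifts (algebraMap F K) := by
  set σ := frobeniusAlgHom F K
  set n := Module.finrank F K
  set h : ℕ → K[X] := fun i => X - C ((σ ^ i) r)
  have hperiod : h n = h 0 := by
    simp only [h, n, σ, ← orderOf_frobeniusAlgHom F K, pow_orderOf_eq_one, pow_zero]
  have hshift : ∏ i ∈ Finset.range n, h (i + 1) = ∏ i ∈ Finset.range n, h i := by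
    refine mul_right_cancel₀ (X_sub_C_ne_zero ((σ ^ 0) r)) ?_
    rw [← Finset.prod_range_succ', Finset.prod_range_succ, hperiod]
  have hfix : (∏ i ∈ Finset.range n, h i).map (σ : K →+* K) = ∏ i ∈ Finset.range n, h i := by
    refine Eq.trans ?_ hshift
    simp only [Polynomial.map_prod, Polynomial.map_sub, map_X, map_C, h, pow_succ',
      AlgHom.mul_apply, RingHom.coe_coe]
  refine (lifts_iff_coeff_lifts _).2 fun k => mem_range_algebraMap_of_frobeniusAlgHom_apply_eq ?_
  simpa only [coeff_map, RingHom.coe_coe, σ] using congrArg (coeff · k) hfix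

theorem map_minpoly_eq_prod_X_sub_C {r : K}
    (hr : (minpoly F r).natDegree = Module.finrank F K) :
    (minpoly F r).map (algebraMap F K) =
      ∏ i ∈ Finset.range (Module.finrank F K), (X - C ((frobeniusAlgHom F K ^ i) r)) := by
  set g := ∏ i ∈ Finset.range (Module.finrank F K), (X - C ((frobeniusAlgHom F K ^ i) r))
  have hmonic : g.Monic := monic_prod_of_monic _ _ fun i _ => monic_X_sub_C _
  obtain ⟨g₀, hmap, hdeg, hmonic₀⟩ :=
    lifts_and_natDegree_eq_and_monic (prod_X_sub_C_frobeniusAlgHom_pow_mem_lifts r) hmonic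
  have hroot : aeval r g₀ = 0 := by
    rw [← eval_map_algebraMap, hmap, eval_prod]
    exact Finset.prod_eq_zero (Finset.mem_range.2 Module.finrank_pos) (by simp)
  have hg₀ : g₀ = minpoly F r :=
    eq_of_monic_of_dvd_of_natDegree_le (minpoly.monic (.of_finite F r)) hmonic₀
      (minpoly.dvd F r hroot)
      (by rw [hdeg, hr, natDegree_finsetProd_X_sub_C_eq_card, Finset.card_range])
  rw [← hg₀, hmap]

theorem algebraMap_eq_of_irreducible_cubic (hrank : Module.finrank F K = 3) {a b c : F}
    (hirr : Irreducible (X ^ 3 + C a * X ^ 2 + C b * X + C c)) {r : K}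
    (hr : aeval r (X ^ 3 + C a * X ^ 2 + C b * X + C c) = 0) :
    algebraMap F K a = -(r + frobeniusAlgHom F K r + (frobeniusAlgHom F K ^ 2) r) ∧
      algebraMap F K b = r * frobeniusAlgHom F K r + r * (frobeniusAlgHom F K ^ 2) r +
        frobeniusAlgHom F K r * (frobeniusAlgHom F K ^ 2) r := by
  set P : Cubic F := ⟨1, a, b, c⟩
  have hP : P.toPoly = X ^ 3 + C a * X ^ 2 + C b * X + C c := by simp [P, Cubic.toPoly]
  rw [← hP] at hirr hr
  have hmin : minpoly F r = P.toPoly :=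
    (minpoly.eq_of_irreducible_of_monic hirr hr Cubic.monic_of_a_eq_one').symm
  have hprod :=
    map_minpoly_eq_prod_X_sub_C (hmin ▸ hrank ▸ Cubic.natDegree_of_a_ne_zero' one_ne_zero)
  rw [hmin, hrank, ← Cubic.map_toPoly] at hprod
  simp only [Finset.prod_range_succ, Finset.prod_range_zero, one_mul, pow_zero, pow_one,
    AlgHom.one_apply, Cubic.prod_X_sub_C_eq, Cubic.toPoly_injective, Cubic.ext_iff] at hprod
  exact ⟨hprod.2.1, hprod.2.2.1⟩

end FiniteField

open FiniteField in
/-- Let f = X^3 + aX^2 + bX + c be monic irreducible over F_q with root r ∈ F_{q^3}.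
If a(a² - 3b) ≠ 0 then the roots r, r^q, r^{q²} are linearly independent over F_q. -/
theorem stmt17 (F K : Type*) [Field F] [Fintype F] [Field K] [Algebra F K]
    (hrank : Module.finrank F K = 3) (a b c : F)
    (hirr : Irreducible (Polynomial.X ^ 3 + Polynomial.C a * Polynomial.X ^ 2 +
      Polynomial.C b * Polynomial.X + Polynomial.C c))
    (r : K)
    (hr : Polynomial.aeval r (Polynomial.X ^ 3 + Polynomial.C a * Polynomial.X ^ 2 +
      Polynomial.C b * Polynomial.X + Polynomial.C c) = 0)
    (h : a * (a ^ 2 - 3 * b) ≠ 0) :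
    LinearIndependent F (fun i : Fin 3 => r ^ (Fintype.card F) ^ (i : ℕ)) := by
  have : FiniteDimensional F K := .of_finrank_eq_succ hrank
  have : Finite K := Module.finite_of_finite F
  set σ := frobeniusAlgHom F K
  have hσ : ∀ m : ℕ, (σ ^ m) r = r ^ Fintype.card F ^ m := fun m => by
    rw [AlgHom.coe_pow, coe_frobeniusAlgHom, pow_iterate]
  have hperiodic : Function.Periodic (fun m : ℕ => (σ ^ m) r) 3 := fun m => by
    simp only [pow_add, ← hrank, σ, ← orderOf_frobeniusAlgHom F K, pow_orderOf_eq_one, mul_one]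
  obtain ⟨ha, hb⟩ := algebraMap_eq_of_irreducible_cubic hrank hirr hr
  simp only [← hσ]
  refine linearIndependent_pow_apply_of_det_ne_zero σ r ?_
  rw [Matrix.det_of_add_of_periodic_three _ hperiodic]
  convert (map_ne_zero (algebraMap F K)).2 h using 1
  simp only [map_mul, map_sub, map_pow, map_ofNat, ha, hb, pow_zero, pow_one, AlgHom.one_apply]
  ring
end
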